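/- arXiv:2603.29955 — 12 statements merged into one kernel-verified Lean document; each statement's English description precedes it below -/
import Mathlib

section
/- Let c be a nonzero complex number that is not a root of unity, and for integers N ≥ 2, d ≥ 1 let X = {x ∈ ℙ^N : x_1^d = c · x_0^{d-1} x_N}. Then the m-th Hadamard power of X is contained in the hypersurface {x_1^d = c^m · x_0^{d-1} x_N}; consequently, the point p_m = (1:⋯:1:c^{-m}) satisfies p_m ∈ X^{⋆m} but p_m ∉ X^{⋆r} for any r < m, so the Hadamard-X-rank of p_m equals m. -/
open MvPolynomial

/-- A polynomial vanishes identically on a set of points of affine space. -/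
def vanishesOn {n : ℕ} (f : MvPolynomial (Fin n) ℂ) (S : Set (Fin n → ℂ)) : Prop :=
  ∀ v ∈ S, MvPolynomial.eval v f = 0

/-- Zariski closure of a set of points: the zero locus of its vanishing ideal. -/
def zclosure {n : ℕ} (S : Set (Fin n → ℂ)) : Set (Fin n → ℂ) :=
  {v | ∀ f : MvPolynomial (Fin n) ℂ, vanishesOn f S → MvPolynomial.eval v f = 0}

/-- Zariski-irreducibility: nonempty and the vanishing ideal is prime. -/
def ZIrred {n : ℕ} (S : Set (Fin n → ℂ)) : Prop :=
  S.Nonempty ∧ ∀ f g : MvPolynomial (Fin n) ℂ,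
    vanishesOn (f * g) S → vanishesOn f S ∨ vanishesOn g S

/-- Krull dimension of (the Zariski closure of) a set, as the order-theoretic
Krull dimension of chains of irreducible Zariski-closed subsets of it. -/
noncomputable def zdim {n : ℕ} (S : Set (Fin n → ℂ)) : WithBot ℕ∞ :=
  Order.krullDim {T : Set (Fin n → ℂ) // zclosure T = T ∧ ZIrred T ∧ T ⊆ zclosure S}

/-- Projective equality of coordinate vectors: equality up to a nonzero scalar. -/
def ProjEq {n : ℕ} (v w : Fin n → ℂ) : Prop :=
  ∃ c : ℂ, c ≠ 0 ∧ w = c • v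

/-- The set of (representatives of) Hadamard products of `m` points of `X`. -/
def hprodSet {n : ℕ} (X : Set (Fin n → ℂ)) (m : ℕ) : Set (Fin n → ℂ) :=
  {p | ∃ f : Fin m → (Fin n → ℂ), (∀ i, f i ∈ X) ∧ ProjEq (∏ i, f i) p}

/-- The `m`-th Hadamard power of `X`: the Zariski closure of the set of Hadamard
products of `m` points of `X`. -/
def hpow {n : ℕ} (X : Set (Fin n → ℂ)) (m : ℕ) : Set (Fin n → ℂ) :=
  zclosure (hprodSet X m)

/-- `p` is an (actual) Hadamard product of `m` points of `X`. -/
def HadDecomp {n : ℕ} (X : Set (Fin n → ℂ)) (m : ℕ) (p : Fin n → ℂ) : Prop :=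
  p ∈ hprodSet X m

/-- The Hadamard-`X`-rank of `p` is at most `r` (and finite, in particular). -/
def HrkLe {n : ℕ} (X : Set (Fin n → ℂ)) (r : ℕ) (p : Fin n → ℂ) : Prop :=
  ∃ m, 1 ≤ m ∧ m ≤ r ∧ HadDecomp X m p

/-- The Hadamard-`X`-rank of `p` is exactly `r`. -/
def HrkEq {n : ℕ} (X : Set (Fin n → ℂ)) (r : ℕ) (p : Fin n → ℂ) : Prop :=
  HadDecomp X r p ∧ ∀ m, 1 ≤ m → m < r → ¬ HadDecomp X m p

/-- The Hadamard-`X`-rank of `p` is finite. -/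
def HrkFin {n : ℕ} (X : Set (Fin n → ℂ)) (p : Fin n → ℂ) : Prop :=
  ∃ m, 1 ≤ m ∧ HadDecomp X m p

/-- `X ⊂ ℙ^{n-1}` is strongly concise: for each coordinate `i` there is a point of `X`
whose `i`-th coordinate vanishes and all other coordinates are nonzero. -/
def StronglyConcise {n : ℕ} (X : Set (Fin n → ℂ)) : Prop :=
  ∀ i : Fin n, ∃ v ∈ X, v i = 0 ∧ ∀ j ≠ i, v j ≠ 0

/-- Hadamard powers of the binomial hypersurface
`{x₁^d = c·x₀^{d-1}x_N}` lie in `{x₁^d = c^m·x₀^{d-1}x_N}`, and the point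
`p_m = (1:⋯:1:c^{-m})` has Hadamard rank exactly `m`. -/
theorem stmt0 (N d m : ℕ) (hN : 2 ≤ N) (hd : 1 ≤ d) (hm : 1 ≤ m)
    (c : ℂ) (hc : c ≠ 0) (hroot : ∀ k : ℕ, 1 ≤ k → c ^ k ≠ 1)
    (X : Set (Fin (N + 1) → ℂ))
    (hX : X = {v | v ≠ 0 ∧ v 1 ^ d = c * (v 0 ^ (d - 1) * v (Fin.last N))})
    (p : Fin (N + 1) → ℂ)
    (hp : p = fun j => if j = Fin.last N then c⁻¹ ^ m else 1) :
    (∀ k : ℕ, hpow X k ⊆ {v | v 1 ^ d = c ^ k * (v 0 ^ (d - 1) * v (Fin.last N))}) ∧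
    p ∈ hprodSet X m ∧ (∀ r, r < m → p ∉ hpow X r) ∧ HrkEq X m p := by
  have h1last : (1 : Fin (N + 1)) ≠ Fin.last N := by
    intro h
    have h2 := congrArg Fin.val h
    rw [Fin.val_last, Fin.val_one', Nat.mod_eq_of_lt (by omega)] at h2
    omega
  have h0last : (0 : Fin (N + 1)) ≠ Fin.last N := by
    intro h
    have h2 := congrArg Fin.val h
    rw [Fin.val_last, Fin.val_zero] at h2
    omega
  -- the main inclusion
  have key : ∀ k : ℕ, hpow X k ⊆
      {v | v 1 ^ d = c ^ k * (v 0 ^ (d - 1) * v (Fin.last N))} := by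
    intro k v hv
    have hvan : vanishesOn
        ((MvPolynomial.X 1 : MvPolynomial (Fin (N + 1)) ℂ) ^ d
          - MvPolynomial.C (c ^ k) *
            (MvPolynomial.X 0 ^ (d - 1) * MvPolynomial.X (Fin.last N)))
        (hprodSet X k) := by
      rintro w ⟨g, hg, l, hl, hw⟩
      have hprod : (∏ i, g i 1) ^ d
          = c ^ k * ((∏ i, g i 0) ^ (d - 1) * ∏ i, g i (Fin.last N)) := by
        have h1 : (∏ i, g i 1) ^ d = ∏ i : Fin k, (g i 1) ^ d := by
          rw [Finset.prod_pow]
        rw [h1]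
        have h2 : ∀ i : Fin k, (g i 1) ^ d
            = c * ((g i 0) ^ (d - 1) * g i (Fin.last N)) := by
          intro i
          have := hg i
          rw [hX] at this
          exact this.2
        rw [Finset.prod_congr rfl fun i _ => h2 i]
        rw [Finset.prod_mul_distrib, Finset.prod_mul_distrib, Finset.prod_const,
          Finset.prod_pow, Finset.card_univ, Fintype.card_fin]
      have hwj : ∀ j, w j = l * ∏ i, g i j := by
        intro j
        rw [hw]
        simp [Finset.prod_apply]
      simp only [map_sub, map_mul, map_pow, MvPolynomial.eval_X, MvPolynomial.eval_C]
      rw [hwj 1, hwj 0, hwj (Fin.last N), sub_eq_zero]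
      rw [mul_pow, hprod, mul_pow]
      have hdd : l ^ d = l ^ (d - 1) * l := by
        rw [← pow_succ, Nat.sub_add_cancel hd]
      rw [hdd]
      ring
    have h0 := hv _ hvan
    simp only [map_sub, map_mul, map_pow, MvPolynomial.eval_X, MvPolynomial.eval_C,
      sub_eq_zero] at h0
    exact h0
  -- the decomposition
  have hdec : p ∈ hprodSet X m := by
    refine ⟨fun _ => fun j => if j = Fin.last N then c⁻¹ else 1, ?_, 1, one_ne_zero, ?_⟩
    · intro i
      rw [hX]
      constructor
      · intro h
        have := congrFun h 0
        simp [h0last] at this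
      · simp [h1last, h0last, hc]
    · funext j
      simp only [one_smul, Finset.prod_apply, Finset.prod_ite_eq', Finset.prod_const,
        Finset.card_univ, Fintype.card_fin]
      rw [hp]
      by_cases hj : j = Fin.last N <;> simp [hj]
  -- not in smaller Hadamard powers
  have hnot : ∀ r, r < m → p ∉ hpow X r := by
    intro r hr hmem
    have h0 := key r hmem
    simp only [hp, Set.mem_setOf_eq, if_neg h1last, if_neg h0last, if_pos rfl,
      one_pow, mul_one] at h0
    have hcm : c ^ m ≠ 0 := pow_ne_zero _ hc
    have : c ^ m = c ^ r := by
      field_simp at h0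
      rw [if_pos trivial, one_div, inv_pow] at h0
      calc c ^ m = 1 * c ^ m := (one_mul _).symm
        _ = c ^ r := by rw [h0, mul_assoc, inv_mul_cancel₀ hcm, mul_one]
    have h1 : c ^ (m - r) * c ^ r = c ^ r := by
      rw [← pow_add, Nat.sub_add_cancel (le_of_lt hr), this]
    have h2 : c ^ (m - r) = 1 :=
      mul_right_cancel₀ (pow_ne_zero _ hc) (by rw [h1, one_mul])
    exact hroot (m - r) (by omega) h2
  refine ⟨key, hdec, hnot, hdec, ?_⟩
  intro m' hm1 hm2 hdec'
  exact hnot m' hm2 (fun f hf => hf p hdec')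
end

section
/- For all integers 1 ≤ k ≤ n there exist vectors v_1, …, v_n ∈ ℂ^k such that {v_1, …, v_k} does not span ℂ^k, but every other k-element subset {v_{i_1}, …, v_{i_k}} (with {i_1,…,i_k} ≠ {1,…,k}) spans ℂ^k. -/
open MvPolynomial

/-!
Points `(1, t, …, t^(k-1))` of the moment curve with distinct parameters are in general
position: any `k` of them form a Vandermonde matrix. Replace one point `p` of the distinguished
`k`-set `S` by a vector of the span of `S \ {p}` that avoids the span of every other
`(k-1)`-set; over an infinite field this is possible, since each of these spans meets that
hyperplane in a proper subspace. Then `S` spans only a hyperplane, while every other `k`-set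
remains linearly independent.
-/

open Submodule Module Function Set

variable {K V ι : Type*} [Field K] [AddCommGroup V] [Module K V]

theorem LinearIndepOn.span_image_eq_top_of_card_eq_finrank [FiniteDimensional K V] {u : ι → V}
    {s : Finset ι} (hu : LinearIndepOn K u s) (hs : s.card = finrank K V) :
    span K (u '' s) = ⊤ := by
  rw [image_eq_range]
  exact hu.span_eq_top_of_card_eq_finrank' (by simpa using hs)

theorem linearIndepOn_powers_of_card_eq {k : ℕ} {t : ι → K} (ht : Injective t)
    {s : Finset ι} (hs : s.card = k) :
    LinearIndepOn K (fun i (j : Fin k) => t i ^ (j : ℕ)) s := by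
  let e : (s : Set ι) ≃ Fin k := Fintype.equivFinOfCardEq (by simpa using hs)
  rw [LinearIndepOn, ← linearIndependent_equiv e.symm]
  refine Matrix.linearIndependent_rows_of_det_ne_zero
    (A := Matrix.vandermonde fun a => t (e.symm a)) ?_
  exact Matrix.det_vandermonde_ne_zero_iff.mpr
    (ht.comp (Subtype.val_injective.comp e.symm.injective))

theorem exists_mem_span_notMem_span [Infinite K] [Fintype ι] {u : ι → V} {A : Finset ι}
    (hu : ∀ s : Finset ι, s.card = A.card + 1 → LinearIndepOn K u s) :
    ∃ w ∈ span K (u '' A), ∀ T : Finset ι, T.card = A.card → T ≠ A → w ∉ span K (u '' T) := by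
  classical
  set U := span K (u '' A)
  have hproper : ∀ T : Finset ι, T.card = A.card → T ≠ A →
      (span K (u '' T)).comap U.subtype ≠ ⊤ := by
    intro T hT hTA htop
    obtain ⟨i, hiA, hiT⟩ : ∃ i ∈ A, i ∉ T := Finset.not_subset.mp fun hAT =>
      hTA (Finset.eq_of_subset_of_card_le hAT hT.le).symm
    have hindep : LinearIndepOn K u (insert i (T : Set ι)) := by
      simpa using hu (insert i T) (by rw [Finset.card_insert_of_notMem hiT, hT])
    refine ((linearIndepOn_insert (by simpa using hiT)).mp hindep).2 ?_
    have hUT : U ≤ span K (u '' T) := by simpa [comap_subtype_eq_top] using htop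
    exact hUT (subset_span (mem_image_of_mem u hiA))
  let P : Finset (Submodule K U) :=
    (Finset.univ.filter fun T : Finset ι => T.card = A.card ∧ T ≠ A).image
      fun T : Finset ι => (span K (u '' (T : Set ι))).comap U.subtype
  have hP : ⊤ ∉ P := by
    intro hmem
    obtain ⟨T, hT, htop⟩ := Finset.mem_image.mp hmem
    rw [Finset.mem_filter] at hT
    exact hproper T hT.2.1 hT.2.2 htop
  obtain ⟨w, hw⟩ := ne_univ_iff_exists_notMem _ |>.mp (Subspace.biUnion_ne_univ_of_top_notMem hP)
  refine ⟨w, w.2, fun T hT hTA hwT => hw ?_⟩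
  exact mem_biUnion (Finset.mem_image_of_mem _ (by simp [hT, hTA])) hwT

theorem exists_span_image_ne_top_and_eq_top_of_ne [Infinite K] [FiniteDimensional K V]
    [Fintype ι] {u : ι → V} (hu : ∀ s : Finset ι, s.card = finrank K V → LinearIndepOn K u s)
    {S : Finset ι} (hS : S.card = finrank K V) (hS₀ : S.Nonempty) :
    ∃ v : ι → V, span K (v '' S) ≠ ⊤ ∧
      ∀ s : Finset ι, s.card = finrank K V → s ≠ S → span K (v '' s) = ⊤ := by
  classical
  obtain ⟨p, hp⟩ := hS₀
  set A := S.erase p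
  have hA : A.card + 1 = finrank K V := by rw [Finset.card_erase_add_one hp, hS]
  obtain ⟨w, hwA, hw⟩ := exists_mem_span_notMem_span (A := A) fun s hs => hu s (hs.trans hA)
  have hupdate : ∀ s : Finset ι, p ∉ s → EqOn (update u p w) u s := fun s hps j hj =>
    update_of_ne (by rintro rfl; exact hps hj) _ _
  refine ⟨update u p w, fun htop => ?_, fun s hs hsS => ?_⟩
  · have hle : span K (update u p w '' S) ≤ span K (u '' A) := by
      rw [span_le]
      rintro _ ⟨j, hj, rfl⟩
      by_cases hjp : j = p
      · simpa [hjp] using hwA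
      · rw [update_of_ne hjp]
        exact subset_span ⟨j, Finset.mem_erase.mpr ⟨hjp, hj⟩, rfl⟩
    rw [htop, top_le_iff, image_eq_range] at hle
    have := finrank_range_le_card (R := K) fun j : (A : Set ι) => u j
    rw [Set.finrank, hle, finrank_top] at this
    simp only [Finset.coe_sort_coe, Fintype.card_coe] at this
    omega
  · refine LinearIndepOn.span_image_eq_top_of_card_eq_finrank ?_ hs
    by_cases hps : p ∈ s
    · have heq := hupdate (s.erase p) (Finset.notMem_erase p s)
      rw [← Finset.insert_erase hps, Finset.coe_insert, linearIndepOn_insert (by simp),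
        image_congr heq, update_self]
      refine ⟨((hu s hs).mono (by simp)).congr heq.symm, hw _ ?_ ?_⟩
      · rw [Finset.card_erase_of_mem hps]; omega
      · exact fun h => hsS (by rw [← Finset.insert_erase hps, h, Finset.insert_erase hp])
    · exact (hu s hs).congr (hupdate s hps).symm

/-- for `1 ≤ k ≤ n` there are vectors `v 1, …, v n` in `ℂ^k` such that the
first `k` of them do not span `ℂ^k`, but every other `k`-element subset spans `ℂ^k`. -/
theorem stmt1 (k n : ℕ) (hk : 1 ≤ k) (hkn : k ≤ n) :
    ∃ v : Fin n → (Fin k → ℂ),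
      Submodule.span ℂ (v '' {i | (i : ℕ) < k}) ≠ ⊤ ∧
      ∀ s : Finset (Fin n), s.card = k → (↑s : Set (Fin n)) ≠ {i : Fin n | (i : ℕ) < k} →
        Submodule.span ℂ (v '' ↑s) = ⊤ := by
  set F := Finset.univ.filter fun i : Fin n => (i : ℕ) < k
  have hF : F.card = finrank ℂ (Fin k → ℂ) := by
    rw [Fin.card_filter_val_lt, finrank_fin_fun]; omega
  have hF₀ : F.Nonempty := ⟨⟨0, by omega⟩, Finset.mem_filter.mpr ⟨Finset.mem_univ _, hk⟩⟩
  have ht : Injective fun i : Fin n => (i : ℂ) := Nat.cast_injective.comp Fin.val_injective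
  obtain ⟨v, hvF, hv⟩ := exists_span_image_ne_top_and_eq_top_of_ne
    (fun s hs => linearIndepOn_powers_of_card_eq ht (hs.trans (finrank_fin_fun ℂ))) hF hF₀
  refine ⟨v, by simpa [F] using hvF, fun s hs hsF => hv s (hs.trans (finrank_fin_fun ℂ).symm) ?_⟩
  rintro rfl
  exact hsF (by simp [F])
end

section
/- The Grassmannian G(k,n) of k-dimensional linear subspaces of ℂ^n, in its Plücker embedding into ℙ(Λ^k ℂ^n), is strongly concise: for each Plücker coordinate index I, there exists a k-plane whose Plücker coordinate at I vanishes but all other Plücker coordinates are nonzero. -/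
/-!
Choose nodes `t : Fin n → ℂ` and let column `j` of `M` be
`(1, t_j, …, t_j^(k-2), t_j^k)`. Writing `t_j^k` as a combination of lower powers modulo
`∏_{j ∈ J} (X - t_j)` shows that the maximal minor at `J` is the Vandermonde determinant of
`(t_j)_{j ∈ J}` times `∑_{j ∈ J} t_j`. It remains to pick distinct nodes whose sum over a
`k`-set vanishes exactly on `I`: real parts centred on `I`, imaginary part `1` off `I`.
-/

open MvPolynomial

open Finset Matrix Polynomial

def gapExponent (m : ℕ) (i : Fin (m + 1)) : ℕ := if i = Fin.last m then m + 1 else i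

lemma det_pow_gapExponent {R : Type*} [CommRing R] {m : ℕ} (t : Fin (m + 1) → R) :
    (Matrix.of fun i q => t q ^ gapExponent m i).det = (vandermonde t).det * ∑ q, t q := by
  nontriviality R
  set P : R[X] := ∏ q, (Polynomial.X - Polynomial.C (t q))
  have hP : IsMonicOfDegree P (m + 1) :=
    ⟨by simp [P], monic_prod_of_monic _ _ fun q _ => monic_X_sub_C (t q)⟩
  -- `X ^ (m + 1) - P` agrees with `X ^ (m + 1)` at the nodes and has degree `≤ m`.
  let p : Fin (m + 1) → R[X] := fun i => if i = Fin.last m then Polynomial.X ^ (m + 1) - P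
    else Polynomial.X ^ (i : ℕ)
  have hdeg : ∀ i, (p i).natDegree ≤ i := by
    intro i
    by_cases hi : i = Fin.last m
    · simp only [p, hi, if_true, Fin.val_last]
      exact Nat.le_of_lt_succ
        ((isMonicOfDegree_X_pow R (m + 1)).natDegree_sub_lt m.succ_ne_zero hP)
    · simp [p, hi]
  have heval : (Matrix.of fun i q => t q ^ gapExponent m i)ᵀ =
      Matrix.of fun q i => (p i).eval (t q) := by
    ext q i
    have hPq : P.eval (t q) = 0 := by
      simp only [P, Polynomial.eval_prod, Polynomial.eval_sub, Polynomial.eval_X,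
        Polynomial.eval_C]
      exact prod_eq_zero (mem_univ q) (sub_self _)
    by_cases hi : i = Fin.last m <;> simp [p, gapExponent, hi, hPq]
  have hcoeff : (Matrix.of fun (i j : Fin (m + 1)) => (p j).coeff i).det = ∑ q, t q := by
    rw [det_of_isUpperTriangular (matrixOfPolynomials_blockTriangular p hdeg),
      Fin.prod_univ_castSucc]
    have hlast : P.coeff m = -∑ q, t q := by
      simpa using prod_X_sub_C_coeff_card_pred univ t (by simp)
    simp [p, Fin.castSucc_ne_last, hlast]
  rw [← det_transpose, heval,
    eval_matrixOfPolynomials_eq_vandermonde_mul_matrixOfPolynomials t p hdeg, det_mul, hcoeff]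

lemma det_pow_gapExponent_orderIsoOfFin {R : Type*} [CommRing R] {n m : ℕ} (t : Fin n → R)
    (J : Finset (Fin n)) (hJ : #J = m + 1) :
    (Matrix.of fun i q => t (J.orderIsoOfFin hJ q) ^ gapExponent m i).det
      = (vandermonde fun q => t (J.orderIsoOfFin hJ q)).det * ∑ j ∈ J, t j := by
  rw [det_pow_gapExponent, ← sum_coe_sort J t]
  exact congrArg _ ((J.orderIsoOfFin hJ).toEquiv.sum_comp fun j => t j)

lemma exists_injective_sum_eq_zero_iff {n : ℕ} (I : Finset (Fin n)) :
    ∃ t : Fin n → ℂ, Function.Injective t ∧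
      ∀ J : Finset (Fin n), #J = #I → (∑ j ∈ J, t j = 0 ↔ J = I) := by
  set μ : ℝ := (∑ i ∈ I, (i : ℝ)) / #I
  refine ⟨fun j => ⟨(j : ℝ) - μ, if j ∈ I then 0 else 1⟩, fun j j' h => ?_,
    fun J hJ => ⟨fun h => ?_, ?_⟩⟩
  · exact Fin.ext (by exact_mod_cast sub_left_injective (Complex.ext_iff.mp h).1)
  · have him : ∑ j ∈ J, (if j ∈ I then (0 : ℝ) else 1) = 0 := by
      simpa using congrArg Complex.im h
    have hJI : J ⊆ I := fun j hj => by
      by_contra hjI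
      have := (sum_eq_zero_iff_of_nonneg (fun i _ => by positivity)).mp him j hj
      simp [hjI] at this
    exact eq_of_subset_of_card_le hJI hJ.ge
  · rintro rfl
    apply Complex.ext
    · rcases J.eq_empty_or_nonempty with hJ | hJ
      · simp [hJ]
      · simp [μ, sum_sub_distrib, mul_div_cancel₀ _ (by positivity : (#J : ℝ) ≠ 0)]
    · simp +contextual

theorem stmt2_general (k n : ℕ) (hk : 1 ≤ k)
    (I : Finset (Fin n)) (hI : I.card = k) :
    ∃ M : Matrix (Fin k) (Fin n) ℂ,
      (Matrix.of fun i j => M i (↑(I.orderIsoOfFin hI j))).det = 0 ∧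
      ∀ (J : Finset (Fin n)) (hJ : J.card = k), J ≠ I →
        (Matrix.of fun i j => M i (↑(J.orderIsoOfFin hJ j))).det ≠ 0 := by
  obtain ⟨m, rfl⟩ : ∃ m, k = m + 1 := ⟨k - 1, by omega⟩
  obtain ⟨t, ht, hsum⟩ := exists_injective_sum_eq_zero_iff I
  refine ⟨Matrix.of fun i j => t j ^ gapExponent m i, ?_, fun J hJ hJI => ?_⟩
  · simp only [Matrix.of_apply, det_pow_gapExponent_orderIsoOfFin, (hsum I rfl).mpr rfl, mul_zero]
  · simp only [Matrix.of_apply, det_pow_gapExponent_orderIsoOfFin]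
    refine mul_ne_zero (det_vandermonde_ne_zero_iff.mpr ?_)
      ((hsum J (hJ.trans hI.symm)).not.mpr hJI)
    exact ht.comp (Subtype.val_injective.comp (J.orderIsoOfFin hJ).injective)

/-- the Grassmannian in its Plücker embedding is strongly concise: for every
`k`-element index set `I` there is a `k × n` matrix whose maximal minor at `I` vanishes
while all other maximal minors are nonzero. -/
theorem stmt2 (k n : ℕ) (hk : 1 ≤ k) (hkn : k ≤ n)
    (I : Finset (Fin n)) (hI : I.card = k) :
    ∃ M : Matrix (Fin k) (Fin n) ℂ,
      (Matrix.of fun i j => M i (↑(I.orderIsoOfFin hI j))).det = 0 ∧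
      ∀ (J : Finset (Fin n)) (hJ : J.card = k), J ≠ I →
        (Matrix.of fun i j => M i (↑(J.orderIsoOfFin hJ j))).det ≠ 0 :=
  stmt2_general k n hk I hI
end

section
/- Let X ⊂ ℙ^N be a strongly concise irreducible variety with finite generic Hadamard-X-rank r° and suppose every point of ℙ^N with all coordinates nonzero has Hadamard-X-rank at most 2r°. Then every point p ∈ ℙ^N has Hadamard-X-rank at most 2r° + z(p), where z(p) is the number of zero coordinates of p. In particular the maximum Hadamard-X-rank is finite. -/
open MvPolynomial

/-- for a strongly concise irreducible variety `X`, assuming the bound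
`Hrk_X ≤ 2r°` on points with all nonzero coordinates, every point `p` satisfies
`Hrk_X(p) ≤ 2r° + z(p)` where `z(p)` is its number of zero coordinates. -/
theorem stmt4 (N : ℕ) (X : Set (Fin (N + 1) → ℂ)) (hirr : ZIrred X)
    (hsc : StronglyConcise X) (r : ℕ) (hr : 1 ≤ r)
    (hbound : ∀ p : Fin (N + 1) → ℂ, (∀ i, p i ≠ 0) → HrkLe X (2 * r) p) :
    ∀ p : Fin (N + 1) → ℂ, p ≠ 0 →
      HrkLe X (2 * r + Nat.card {i : Fin (N + 1) // p i = 0}) p := by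
  classical
  intro p hp
  choose v hvX hv0 hvne using fun i : {i : Fin (N + 1) // p i = 0} => hsc i.1
  set w : Fin (N + 1) → ℂ := ∏ i, v i with hw
  have hwapp : ∀ j, w j = ∏ i, v i j := by
    intro j; rw [hw, Finset.prod_apply]
  have hwj : ∀ j, p j ≠ 0 → w j ≠ 0 := by
    intro j hj
    rw [hwapp]
    exact Finset.prod_ne_zero_iff.mpr fun i _ =>
      hvne i j (fun h => hj (h ▸ i.2))
  have hwz : ∀ j, p j = 0 → w j = 0 := by
    intro j hj
    rw [hwapp]
    exact Finset.prod_eq_zero (Finset.mem_univ ⟨j, hj⟩) (hv0 ⟨j, hj⟩)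
  set q : Fin (N + 1) → ℂ := fun j => if p j = 0 then 1 else p j / w j with hq
  have hqne : ∀ j, q j ≠ 0 := by
    intro j
    by_cases h : p j = 0
    · simp [hq, h]
    · simp only [hq, if_neg h]
      exact div_ne_zero h (hwj j h)
  obtain ⟨m, hm1, hm2, f, hfX, c, hc, hcq⟩ := hbound q hqne
  set z := Nat.card {i : Fin (N + 1) // p i = 0} with hz
  have e : Fin z ≃ {i : Fin (N + 1) // p i = 0} :=
    (Finite.equivFinOfCardEq rfl).symm
  refine ⟨m + z, by omega, by omega,
    Fin.append f (fun k => v (e k)), ?_, c, hc, ?_⟩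
  · intro k
    refine Fin.addCases (fun j => ?_) (fun j => ?_) k
    · rw [Fin.append_left]; exact hfX j
    · rw [Fin.append_right]; exact hvX (e j)
  · have hprod : (∏ k, Fin.append f (fun k => v (e k)) k) =
        (∏ i, f i) * w := by
      rw [Fin.prod_univ_add]
      congr 1
      · exact Finset.prod_congr rfl fun i _ => Fin.append_left _ _ _
      · rw [hw, ← Equiv.prod_comp e (fun i => v i)]
        exact Finset.prod_congr rfl fun i _ => Fin.append_right _ _ _
    rw [hprod]
    funext j
    have hf : q j = c * (∏ i, f i) j := by rw [hcq]; rfl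
    by_cases h : p j = 0
    · simp [Pi.smul_apply, Pi.mul_apply, hwz j h, h]
    · have : (∏ i, f i) j = (p j / w j) / c := by
        rw [hq] at hf
        simp only [if_neg h] at hf
        rw [hf, mul_comm, mul_div_assoc, div_self hc, mul_one]
      simp only [Pi.smul_apply, Pi.mul_apply, this, smul_eq_mul]
      field_simp [hwj j h]
end

section
/- A variety X ⊂ ℙ^N is strongly concise if and only if its vanishing radical ideal I(X) does not contain any polynomial of the form x_i·F + x^α, where x^α is a monomial in the variables {x_0,…,x_N} \ {x_i} (not involving x_i) and F is any polynomial. -/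
open MvPolynomial

section Monomial

variable {σ R : Type*} [CommSemiring R]

theorem eval_monomial_one_ne_zero [Nontrivial R] [NoZeroDivisors R] {v : σ → R} {α : σ →₀ ℕ}
    (hv : ∀ j ∈ α.support, v j ≠ 0) : eval v (monomial α 1) ≠ 0 := by
  rw [eval_monomial, one_mul]
  exact Finset.prod_ne_zero_iff.2 fun j hj => pow_ne_zero _ (hv j hj)

theorem eval_monomial_one_eq_zero {v : σ → R} {α : σ →₀ ℕ} {j : σ} (hj : α j ≠ 0)
    (hv : v j = 0) : eval v (monomial α 1) = 0 := by
  rw [eval_monomial, one_mul]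
  exact Finset.prod_eq_zero (Finsupp.mem_support_iff.2 hj) (by simp [hv, hj])

theorem eval_X_mul_add_monomial_ne_zero [Nontrivial R] [NoZeroDivisors R] {v : σ → R} {i : σ}
    {α : σ →₀ ℕ} (F : MvPolynomial σ R) (hαi : α i = 0) (hvi : v i = 0) (hv : ∀ j ≠ i, v j ≠ 0) :
    eval v (X i * F + monomial α 1) ≠ 0 := by
  rw [map_add, map_mul, eval_X, hvi, zero_mul, zero_add]
  exact eval_monomial_one_ne_zero fun j hj =>
    hv j fun hji => Finsupp.mem_support_iff.1 hj (hji ▸ hαi)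

end Monomial

theorem vanishesOn_iff_mem_vanishingIdeal {n : ℕ} {f : MvPolynomial (Fin n) ℂ}
    {S : Set (Fin n → ℂ)} : vanishesOn f S ↔ f ∈ vanishingIdeal ℂ S := by
  simp [vanishesOn]

/-- Nullstellensatz applied to `I(V) + (x_i)`, whose zero locus is `V ∩ {x_i = 0}`. -/
theorem exists_vanishesOn_X_mul_add_pow {n : ℕ} {V : Set (Fin n → ℂ)} (hV : zclosure V = V)
    (i : Fin n) (f : MvPolynomial (Fin n) ℂ) (hf : ∀ v ∈ V, v i = 0 → eval v f = 0) :
    ∃ (k : ℕ) (F : MvPolynomial (Fin n) ℂ), vanishesOn (X i * F + f ^ k) V := by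
  have hrad : f ∈ (vanishingIdeal ℂ V ⊔ Ideal.span {X i}).radical := by
    rw [← vanishingIdeal_zeroLocus_eq_radical (K := ℂ)]
    intro v hv
    have hvV : v ∈ V := hV ▸ fun g hg => by
      simpa using hv g (Ideal.mem_sup_left (vanishesOn_iff_mem_vanishingIdeal.1 hg))
    have hvi : v i = 0 := by simpa using hv (X i) (Ideal.mem_sup_right (Ideal.subset_span rfl))
    simpa using hf v hvV hvi
  obtain ⟨k, hk⟩ := hrad
  obtain ⟨g, hg, _, hXi, hsum⟩ := Submodule.mem_sup.1 hk
  obtain ⟨F, rfl⟩ := Ideal.mem_span_singleton.1 hXi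
  refine ⟨k, -F, vanishesOn_iff_mem_vanishingIdeal.2 ?_⟩
  convert hg using 1
  rw [← hsum]
  ring

/-- a Zariski-closed set `X` is strongly concise iff its vanishing ideal
contains no polynomial of the form `x_i·F + x^α` with `x^α` a monomial not involving
`x_i`. -/
theorem stmt7 (N : ℕ) (X : Set (Fin (N + 1) → ℂ)) (hX : zclosure X = X) :
    StronglyConcise X ↔
      ¬ ∃ (i : Fin (N + 1)) (F : MvPolynomial (Fin (N + 1)) ℂ) (α : Fin (N + 1) →₀ ℕ),
          α i = 0 ∧ vanishesOn (MvPolynomial.X i * F + MvPolynomial.monomial α 1) X := by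
  constructor
  · rintro hSC ⟨i, F, α, hαi, hvan⟩
    obtain ⟨v, hvX, hvi, hv⟩ := hSC i
    exact eval_X_mul_add_monomial_ne_zero F hαi hvi hv (hvan v hvX)
  · intro h i
    by_contra! hc
    -- `β` is the exponent of `∏_{j ≠ i} x_j`.
    obtain ⟨β, hβi, hβ⟩ : ∃ β : Fin (N + 1) →₀ ℕ, β i = 0 ∧ ∀ j ≠ i, β j ≠ 0 :=
      ⟨Finsupp.equivFunOnFinite.symm fun j => if j = i then 0 else 1, by simp,
        fun j hj => by simp [hj]⟩
    obtain ⟨k, F, hF⟩ := exists_vanishesOn_X_mul_add_pow hX i (monomial β 1) fun v hvX hvi => by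
      obtain ⟨j, hji, hvj⟩ := hc v hvX hvi
      exact eval_monomial_one_eq_zero (hβ j hji) hvj
    exact h ⟨i, F, k • β, by simp [hβi], by rwa [monomial_pow, one_pow] at hF⟩
end

section
/- Consider the conic Q = {x_0x_1 + x_0x_2 + x_1x_2 = 0} ⊂ ℙ^2. Every point (a:b:0) with ab ≠ 0 cannot be written as a Hadamard product of finitely many points of Q; i.e. its Hadamard-Q-rank is infinite. -/
open MvPolynomial

/-- for the conic `Q = {x₀x₁ + x₀x₂ + x₁x₂ = 0} ⊂ ℙ²`, every point
`(a:b:0)` with `ab ≠ 0` has infinite Hadamard-`Q`-rank. -/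
theorem stmt9 (a b : ℂ) (ha : a ≠ 0) (hb : b ≠ 0) :
    ¬ HrkFin {v : Fin 3 → ℂ | v ≠ 0 ∧ v 0 * v 1 + v 0 * v 2 + v 1 * v 2 = 0}
      ![a, b, 0] := by
  rintro ⟨m, hm, f, hf, c, hc, hp⟩
  have h0 : a = c * ∏ i, f i 0 := by
    have := congrFun hp 0
    simpa [Finset.prod_apply] using this
  have h1 : b = c * ∏ i, f i 1 := by
    have := congrFun hp 1
    simpa [Finset.prod_apply] using this
  have h2 : (0 : ℂ) = c * ∏ i, f i 2 := by
    have := congrFun hp 2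
    simpa [Finset.prod_apply] using this
  have hprod2 : ∏ i, f i 2 = 0 := by
    rcases mul_eq_zero.mp h2.symm with h | h
    · exact absurd h hc
    · exact h
  obtain ⟨i, -, hi2⟩ := Finset.prod_eq_zero_iff.mp hprod2
  have hQ := (hf i).2
  rw [hi2] at hQ
  simp only [mul_zero, zero_mul, add_zero] at hQ
  rcases mul_eq_zero.mp hQ with h | h
  · exact ha (by rw [h0, Finset.prod_eq_zero (Finset.mem_univ i) h, mul_zero])
  · exact hb (by rw [h1, Finset.prod_eq_zero (Finset.mem_univ i) h, mul_zero])
end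

section
/- Let C = {x_0(x_1+x_2) + (x_1−x_2)^2 = 0} ⊂ ℙ^2. The point (0:1:−1) has Hadamard-C-rank exactly 3: it cannot be written as a Hadamard product of two points of C, but equals (0:1:1) ⋆ (−1:6:3) ⋆ (9:1:−2), all three factors lying on C. -/
open MvPolynomial

/-!
A point of `C` with `x₀ = 0` is `(0:1:1)`, and the only points of `C` of the form `(u:t:−t)` have
`t = 0`. In a decomposition `(0:1:−1) = v ⋆ w` one factor, say `v`, has `v₀ = 0`, so `v = (0:1:1)`;
then `w` has the shape `(w₀:t:−t)` with `t ≠ 0`, which is impossible. A single factor fails already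
because `(0:1:1)` is not proportional to `(0:1:−1)`.
-/

section ProjEq

variable {n : ℕ} {v w : Fin n → ℂ}

theorem ProjEq.apply_eq_zero_iff (h : ProjEq v w) (i : Fin n) : w i = 0 ↔ v i = 0 := by
  obtain ⟨c, hc, rfl⟩ := h
  simp [hc]

theorem ProjEq.mul_apply_comm (h : ProjEq v w) (i j : Fin n) : v i * w j = v j * w i := by
  obtain ⟨c, -, rfl⟩ := h
  simp only [Pi.smul_apply, smul_eq_mul]
  ring

end ProjEq

section HadDecomp

variable {n : ℕ} {X : Set (Fin n → ℂ)} {p : Fin n → ℂ}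

theorem hadDecomp_one_iff : HadDecomp X 1 p ↔ ∃ v ∈ X, ProjEq v p := by
  refine ⟨fun ⟨f, hf, hp⟩ => ⟨f 0, hf 0, by simpa using hp⟩, fun ⟨v, hv, hp⟩ => ?_⟩
  exact ⟨fun _ => v, fun _ => hv, by simpa using hp⟩

theorem hadDecomp_two_iff : HadDecomp X 2 p ↔ ∃ v ∈ X, ∃ w ∈ X, ProjEq (v * w) p := by
  refine ⟨fun ⟨f, hf, hp⟩ => ⟨f 0, hf 0, f 1, hf 1, by simpa [Fin.prod_univ_two] using hp⟩,
    fun ⟨v, hv, w, hw, hp⟩ => ?_⟩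
  refine ⟨![v, w], fun i => ?_, by simpa [Fin.prod_univ_two] using hp⟩
  fin_cases i <;> assumption

theorem hadDecomp_three {u v w : Fin n → ℂ} (hu : u ∈ X) (hv : v ∈ X) (hw : w ∈ X)
    (hp : ProjEq (u * v * w) p) : HadDecomp X 3 p := by
  refine ⟨![u, v, w], fun i => ?_, by simpa [Fin.prod_univ_three] using hp⟩
  fin_cases i <;> assumption

end HadDecomp

section Conic

def conic : Set (Fin 3 → ℂ) := {v | v ≠ 0 ∧ v 0 * (v 1 + v 2) + (v 1 - v 2) ^ 2 = 0}

variable {v w : Fin 3 → ℂ}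

theorem mem_conic_iff : v ∈ conic ↔ v ≠ 0 ∧ v 0 * (v 1 + v 2) + (v 1 - v 2) ^ 2 = 0 := Iff.rfl

theorem conic_apply_one_eq_apply_two (hv : v ∈ conic) (h0 : v 0 = 0) : v 1 = v 2 := by
  have h := hv.2
  rw [h0, zero_mul, zero_add, sq_eq_zero_iff] at h
  exact sub_eq_zero.mp h

theorem conic_apply_two_ne_neg (hv : v ∈ conic) (h1 : v 1 ≠ 0) : v 2 ≠ -v 1 := by
  intro h2
  have h := hv.2
  rw [h2] at h
  exact h1 (by simpa using (by linear_combination h : (2 * v 1) ^ 2 = 0))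

theorem not_projEq_zero_one_neg_one_of_mem_conic (hv : v ∈ conic) (hv0 : v 0 = 0) :
    ¬ ProjEq v ![0, 1, -1] := by
  intro h
  have hv1 : v 1 ≠ 0 := by simpa using (h.apply_eq_zero_iff 1).not
  have hcross := h.mul_apply_comm 1 2
  simp only [Matrix.cons_val] at hcross
  exact hv1 (by linear_combination (conic_apply_one_eq_apply_two hv hv0 - hcross) / 2)

theorem not_projEq_mul_zero_one_neg_one_of_mem_conic (hv : v ∈ conic) (hw : w ∈ conic)
    (hv0 : v 0 = 0) :
    ¬ ProjEq (v * w) ![0, 1, -1] := by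
  intro h
  have hvw1 : v 1 * w 1 ≠ 0 := by simpa using (h.apply_eq_zero_iff 1).not
  have hcross := h.mul_apply_comm 1 2
  simp only [Pi.mul_apply, Matrix.cons_val] at hcross
  rw [← conic_apply_one_eq_apply_two hv hv0] at hcross
  refine conic_apply_two_ne_neg hw (right_ne_zero_of_mul hvw1) ?_
  have : v 1 * (w 2 + w 1) = 0 := by linear_combination -hcross
  linear_combination (mul_eq_zero.mp this).resolve_left (left_ne_zero_of_mul hvw1)

theorem not_hadDecomp_conic_one_zero_one_neg_one : ¬ HadDecomp conic 1 ![0, 1, -1] := by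
  rw [hadDecomp_one_iff]
  rintro ⟨v, hv, h⟩
  have hv0 : v 0 = 0 := by simpa using (h.apply_eq_zero_iff 0).mp rfl
  exact not_projEq_zero_one_neg_one_of_mem_conic hv hv0 h

theorem not_hadDecomp_conic_two_zero_one_neg_one : ¬ HadDecomp conic 2 ![0, 1, -1] := by
  rw [hadDecomp_two_iff]
  rintro ⟨v, hv, w, hw, h⟩
  have hvw0 : v 0 * w 0 = 0 := by simpa using (h.apply_eq_zero_iff 0).mp rfl
  rcases mul_eq_zero.mp hvw0 with hv0 | hw0
  · exact not_projEq_mul_zero_one_neg_one_of_mem_conic hv hw hv0 h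
  · exact not_projEq_mul_zero_one_neg_one_of_mem_conic hw hv hw0 (mul_comm v w ▸ h)

end Conic

/-- for the conic `C = {x₀(x₁+x₂) + (x₁−x₂)² = 0} ⊂ ℙ²`, the point
`(0:1:−1)` has Hadamard-`C`-rank exactly `3`, witnessed by
`(0:1:−1) = (0:1:1) ⋆ (−1:6:3) ⋆ (9:1:−2)`. -/
theorem stmt10 (C : Set (Fin 3 → ℂ))
    (hC : C = {v | v ≠ 0 ∧ v 0 * (v 1 + v 2) + (v 1 - v 2) ^ 2 = 0}) :
    (![(0 : ℂ), 1, 1] ∈ C ∧ ![(-1 : ℂ), 6, 3] ∈ C ∧ ![(9 : ℂ), 1, -2] ∈ C) ∧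
    ProjEq (![(0 : ℂ), 1, 1] * ![(-1 : ℂ), 6, 3] * ![(9 : ℂ), 1, -2]) ![(0 : ℂ), 1, -1] ∧
    HrkEq C 3 ![(0 : ℂ), 1, -1] := by
  obtain rfl : C = conic := hC
  have hmem : ![(0 : ℂ), 1, 1] ∈ conic ∧ ![(-1 : ℂ), 6, 3] ∈ conic ∧ ![(9 : ℂ), 1, -2] ∈ conic := by
    simp only [mem_conic_iff, ne_eq, funext_iff, not_forall, Fin.exists_fin_succ, Matrix.cons_val]
    norm_num
  have hprod : ProjEq (![(0 : ℂ), 1, 1] * ![(-1 : ℂ), 6, 3] * ![(9 : ℂ), 1, -2]) ![0, 1, -1] := by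
    refine ⟨6⁻¹, by norm_num, funext fun i => ?_⟩
    fin_cases i <;> norm_num
  refine ⟨hmem, hprod, hadDecomp_three hmem.1 hmem.2.1 hmem.2.2 hprod, fun m hm1 hm3 => ?_⟩
  interval_cases m
  · exact not_hadDecomp_conic_one_zero_one_neg_one
  · exact not_hadDecomp_conic_two_zero_one_neg_one
end

section
/- Let C = {x_0(x_1+x_2) + (x_1−x_2)^2 = 0} ⊂ ℙ^2. Every point (0:s:t) with st ≠ 0 and (s:t) ∉ {(1:1), (1:−1)} has Hadamard-C-rank exactly 2, witnessed by the decomposition (0:s:t) = (0:1:1) ⋆ (−(s−t)^2 : s(s+t) : t(s+t)). -/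
open MvPolynomial

/-- for `C = {x₀(x₁+x₂) + (x₁−x₂)² = 0} ⊂ ℙ²`, every point `(0:s:t)` with
`st ≠ 0`, `s ≠ t`, `s ≠ −t` has Hadamard-`C`-rank exactly `2`, witnessed by
`(0:s:t) = (0:1:1) ⋆ (−(s−t)² : s(s+t) : t(s+t))`. -/
theorem stmt11 (C : Set (Fin 3 → ℂ))
    (hC : C = {v | v ≠ 0 ∧ v 0 * (v 1 + v 2) + (v 1 - v 2) ^ 2 = 0})
    (s t : ℂ) (hs : s ≠ 0) (ht : t ≠ 0) (hst : s ≠ t) (hst' : s ≠ -t) :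
    ![(0 : ℂ), 1, 1] ∈ C ∧ ![-(s - t) ^ 2, s * (s + t), t * (s + t)] ∈ C ∧
    ProjEq (![(0 : ℂ), 1, 1] * ![-(s - t) ^ 2, s * (s + t), t * (s + t)]) ![0, s, t] ∧
    HrkEq C 2 ![0, s, t] := by

  have hsum : s + t ≠ 0 := fun h => hst' (by linear_combination h)
  have hdiff : s - t ≠ 0 := fun h => hst (by linear_combination h)
  subst hC
  have h1 : ![(0 : ℂ), 1, 1] ∈ {v : Fin 3 → ℂ | v ≠ 0 ∧ v 0 * (v 1 + v 2) + (v 1 - v 2) ^ 2 = 0} := by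
    constructor
    · intro h
      have := congrFun h 1
      simp at this
    · simp
  have h2 : ![-(s - t) ^ 2, s * (s + t), t * (s + t)] ∈
      {v : Fin 3 → ℂ | v ≠ 0 ∧ v 0 * (v 1 + v 2) + (v 1 - v 2) ^ 2 = 0} := by
    constructor
    · intro h
      have h0 := congrFun h 0
      simp at h0
      exact hdiff h0
    · show (-(s - t) ^ 2) * (s * (s + t) + t * (s + t)) + (s * (s + t) - t * (s + t)) ^ 2 = 0
      ring
  have hproj : ProjEq (![(0 : ℂ), 1, 1] * ![-(s - t) ^ 2, s * (s + t), t * (s + t)]) ![0, s, t] := by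
    refine ⟨(s + t)⁻¹, inv_ne_zero hsum, ?_⟩
    funext i
    fin_cases i <;> simp [Pi.mul_apply] <;> field_simp <;> ring
  refine ⟨h1, h2, hproj, ?_, ?_⟩
  · -- HadDecomp C 2
    refine ⟨![![(0 : ℂ), 1, 1], ![-(s - t) ^ 2, s * (s + t), t * (s + t)]], ?_, ?_⟩
    · intro i; fin_cases i <;> [exact h1; exact h2]
    · have : (∏ i : Fin 2, ![![(0 : ℂ), 1, 1], ![-(s - t) ^ 2, s * (s + t), t * (s + t)]] i)
          = ![(0 : ℂ), 1, 1] * ![-(s - t) ^ 2, s * (s + t), t * (s + t)] := by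
        rw [Fin.prod_univ_two]; rfl
      rw [this]; exact hproj
  · intro m hm1 hm2
    interval_cases m
    rintro ⟨f, hf, c, hc, hp⟩
    rw [Fin.prod_univ_one] at hp
    obtain ⟨hne, heq⟩ := hf 0
    have h0 : (0 : ℂ) = c * f 0 0 := congrFun hp 0
    have hv0 : f 0 0 = 0 := by
      rcases mul_eq_zero.mp h0.symm with h | h
      · exact absurd h hc
      · exact h
    rw [hv0] at heq
    have h12 : f 0 1 = f 0 2 := by
      have : (f 0 1 - f 0 2) ^ 2 = 0 := by linear_combination heq
      have := pow_eq_zero_iff (n := 2) two_ne_zero |>.mp this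
      linear_combination this
    have hs' : s = c * f 0 1 := congrFun hp 1
    have ht' : t = c * f 0 2 := congrFun hp 2
    exact hst (by rw [hs', ht', h12])
end

section
/- The tangential variety τ_{d,n} = closure of {[L^{d−1}M] : L, M linear forms in n+1 variables} ⊂ ℙ(Sym^d ℂ^{n+1}) is strongly concise: for every monomial x^α of degree d in n+1 variables, there exist linear forms L and M such that the coefficient of x^α in L^{d−1}M is zero while the coefficients of all other degree-d monomials are nonzero. -/
open MvPolynomial

/-!
Take `L = x₀ + ⋯ + xₙ`. Expanding `L^{d-1}·M` with the multinomial theorem, the coefficient of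
`x^β` is `(d-1)!/β! · ∑ⱼ βⱼ bⱼ`, where `bⱼ` are the coefficients of `M`. So it suffices to find
`b` such that, among exponents of degree `d`, the linear form `β ↦ ∑ⱼ βⱼ bⱼ` vanishes exactly
at `α`: take `bⱼ = (d+1)^j - w(α)/d`, where `w(β) = ∑ⱼ βⱼ (d+1)^j` is injective on exponents
of degree `d` by uniqueness of base-`(d+1)` expansions.
-/

open MvPolynomial Finsupp Nat

section
variable {σ : Type*} [Fintype σ] [DecidableEq σ]

lemma prod_factorial_add_single (γ : σ →₀ ℕ) (j : σ) :
    ∏ i, ((γ + single j 1 : σ →₀ ℕ) i)! = (γ j + 1) * ∏ i, (γ i)! := by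
  rw [← Finset.mul_prod_erase _ _ (Finset.mem_univ j),
    ← Finset.mul_prod_erase _ (fun i => (γ i)!) (Finset.mem_univ j), ← mul_assoc]
  congr 1
  · simp [Nat.factorial_succ]
  · refine Finset.prod_congr rfl fun i hi => ?_
    simp [single_eq_of_ne (Finset.ne_of_mem_erase hi)]

lemma prod_factorial_mul_coeff_sum_X_pow_mul_X {R : Type*} [CommSemiring R] {n : ℕ}
    (β : σ →₀ ℕ) (hβ : ∑ i, β i = n + 1) (j : σ) :
    (∏ i, ((β i)! : R)) * coeff β ((∑ i, X i : MvPolynomial σ R) ^ n * X j) = β j * n ! := by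
  rcases Nat.eq_zero_or_pos (β j) with hj | hj
  · rw [coeff_mul_X', if_neg (by simpa using hj)]
    simp [hj]
  obtain ⟨γ, rfl⟩ : ∃ γ, β = γ + single j 1 :=
    ⟨β - single j 1, (tsub_add_cancel_of_le (single_le_iff.2 hj)).symm⟩
  have hγ : γ.sum (fun _ m => m) = n := by
    rw [sum_fintype _ _ fun _ => rfl]
    simpa [Finset.sum_add_distrib] using hβ
  rw [coeff_mul_X, coeff_sum_X_pow_of_fintype, if_pos hγ,
    multinomial_eq_of_support_subset (Finset.subset_univ _)]
  have key : (∏ i, ((γ + single j 1 : σ →₀ ℕ) i)!) * Nat.multinomial Finset.univ γ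
      = (γ + single j 1 : σ →₀ ℕ) j * n ! := by
    rw [prod_factorial_add_single, mul_assoc, Nat.multinomial_spec]
    simp [← hγ, sum_fintype]
  exact_mod_cast congrArg (Nat.cast : ℕ → R) key

lemma prod_factorial_mul_coeff_sum_X_pow_mul_linear {R : Type*} [CommSemiring R] {n : ℕ}
    (β : σ →₀ ℕ) (hβ : ∑ i, β i = n + 1) (b : σ → R) :
    (∏ i, ((β i)! : R)) * coeff β ((∑ i, X i : MvPolynomial σ R) ^ n * ∑ i, C (b i) * X i)
      = n ! * ∑ j, (β j : R) * b j := by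
  simp only [Finset.mul_sum, coeff_sum, mul_left_comm _ (C _), coeff_C_mul]
  refine Finset.sum_congr rfl fun j _ => ?_
  rw [mul_left_comm, prod_factorial_mul_coeff_sum_X_pow_mul_X β hβ j]
  ring

lemma coeff_sum_X_pow_mul_linear_eq_zero_iff {K : Type*} [Field K] [CharZero K] {n : ℕ}
    (β : σ →₀ ℕ) (hβ : ∑ i, β i = n + 1) (b : σ → K) :
    coeff β ((∑ i, X i : MvPolynomial σ K) ^ n * ∑ i, C (b i) * X i) = 0
      ↔ ∑ j, (β j : K) * b j = 0 := by
  have hβ! : (∏ i, ((β i)! : K)) ≠ 0 :=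
    Finset.prod_ne_zero_iff.2 fun i _ => Nat.cast_ne_zero.2 (factorial_ne_zero _)
  rw [← mul_right_inj' hβ!, prod_factorial_mul_coeff_sum_X_pow_mul_linear β hβ, mul_zero,
    mul_eq_zero_iff_left (Nat.cast_ne_zero.2 (factorial_ne_zero n))]

end

lemma eq_of_sum_mul_pow_eq {N m : ℕ} {f g : Fin N → ℕ} (hf : ∀ i, f i < m) (hg : ∀ i, g i < m)
    (h : ∑ i, f i * m ^ (i : ℕ) = ∑ i, g i * m ^ (i : ℕ)) : f = g := by
  have := finFunctionFinEquiv.injective (a₁ := fun i => (⟨f i, hf i⟩ : Fin m))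
    (a₂ := fun i => ⟨g i, hg i⟩) (Fin.ext (by simpa [finFunctionFinEquiv_apply] using h))
  funext i
  exact congrArg Fin.val (congrFun this i)

lemma exists_sum_mul_eq_zero_iff_eq {K : Type*} [Field K] [CharZero K] {N d : ℕ} (hd : d ≠ 0)
    (α : Fin N →₀ ℕ) (hα : ∑ i, α i = d) :
    ∃ b : Fin N → K, ∀ β : Fin N →₀ ℕ, ∑ i, β i = d → (∑ j, (β j : K) * b j = 0 ↔ β = α) := by
  set weight : (Fin N →₀ ℕ) → ℕ := fun γ => ∑ i, γ i * (d + 1) ^ (i : ℕ)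
  refine ⟨fun j => ((d + 1) ^ (j : ℕ) : ℕ) - (weight α : K) / d, fun β hβ => ?_⟩
  have hβK : ∑ j, (β j : K) = d := by exact_mod_cast hβ
  have hsum : ∑ j, (β j : K) * (((d + 1) ^ (j : ℕ) : ℕ) - (weight α : K) / d)
      = weight β - weight α := by
    simp only [mul_sub, Finset.sum_sub_distrib, ← Finset.sum_mul, hβK,
      mul_div_cancel₀ _ (Nat.cast_ne_zero.2 hd : (d : K) ≠ 0), weight]
    push_cast
    rfl
  have hlt : ∀ γ : Fin N →₀ ℕ, ∑ i, γ i = d → ∀ i, γ i < d + 1 := fun γ hγ i =>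
    Nat.lt_succ_of_le (hγ ▸ Finset.single_le_sum (fun i _ => Nat.zero_le (γ i)) (Finset.mem_univ i))
  rw [hsum, sub_eq_zero, Nat.cast_inj]
  refine ⟨fun h => DFunLike.coe_injective (eq_of_sum_mul_pow_eq (hlt β hβ) (hlt α hα) h),
    fun h => h ▸ rfl⟩

/-- the tangential variety to the Veronese is strongly concise: for every
monomial `x^α` of degree `d` there are linear forms `L, M` such that the coefficient of
`x^α` in `L^{d-1}·M` vanishes while all other degree-`d` coefficients are nonzero. -/
theorem stmt12 (n d : ℕ) (hd : 1 ≤ d) (α : Fin (n + 1) →₀ ℕ)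
    (hα : (α.sum fun _ k => k) = d) :
    ∃ a b : Fin (n + 1) → ℂ,
      MvPolynomial.coeff α
        ((∑ i, MvPolynomial.C (a i) * MvPolynomial.X i) ^ (d - 1) *
          (∑ i, MvPolynomial.C (b i) * MvPolynomial.X i)) = 0 ∧
      ∀ β : Fin (n + 1) →₀ ℕ, (β.sum fun _ k => k) = d → β ≠ α →
        MvPolynomial.coeff β
          ((∑ i, MvPolynomial.C (a i) * MvPolynomial.X i) ^ (d - 1) *
            (∑ i, MvPolynomial.C (b i) * MvPolynomial.X i)) ≠ 0 := by
  have hdeg : ∀ γ : Fin (n + 1) →₀ ℕ, (γ.sum fun _ k => k) = d → ∑ i, γ i = d := fun γ hγ =>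
    (sum_fintype γ _ fun _ => rfl).symm.trans hγ
  have hdeg' : ∀ γ : Fin (n + 1) →₀ ℕ, (γ.sum fun _ k => k) = d → ∑ i, γ i = d - 1 + 1 :=
    fun γ hγ => (hdeg γ hγ).trans (by omega)
  obtain ⟨b, hb⟩ := exists_sum_mul_eq_zero_iff_eq (K := ℂ) (by omega) α (hdeg α hα)
  refine ⟨1, b, ?_, fun β hβ hne => ?_⟩ <;> simp only [Pi.one_apply, map_one, one_mul]
  · rw [coeff_sum_X_pow_mul_linear_eq_zero_iff α (hdeg' α hα), hb α (hdeg α hα)]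
  · rw [Ne, coeff_sum_X_pow_mul_linear_eq_zero_iff β (hdeg' β hβ), hb β (hdeg β hβ)]
    exact hne
end

section
/- Let X ⊂ ℙ^N be an irreducible variety of dimension n ≤ N/2 such that every point of X has at most n zero coordinates (i.e. X ∩ Δ_{N−n−1} = ∅, where Δ_k is the set of points with at most k+1 nonzero coordinates). Then for every r ≥ 2 with rn ≤ N, the r-fold Hadamard product map X^r → ℙ^N is everywhere defined and its image is Zariski closed; consequently X^{⋆r} = {p_1 ⋆ ⋯ ⋆ p_r : p_i ∈ X}, and every point of X^{⋆r} not in ∪_{s<r}(X ∪ X^{⋆2} ∪ ⋯ ∪ X^{⋆s}) has border Hadamard-X-rank equal to Hadamard-X-rank equal to r. -/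
open MvPolynomial

/-!
Write `W = (X ∪ {0})ʳ ⊆ (ℂ^{N+1})ʳ` and `μⱼ = ∏ᵢ x_{ij}` for the coordinates of the Hadamard
product. A point of `W` whose Hadamard product vanishes has a zero block: otherwise its `r`
blocks lie in `X`, and their zero sets, of at most `n` elements each, could not cover all
`N + 1 > rn` coordinates. By the Nullstellensatz every transversal monomial `∏ᵢ x_{i,J(i)}` is
then nilpotent modulo `I(W) + (μ₀, …, μ_N)`. As `W` is stable under scaling each block
separately, `I(W)` is multihomogeneous, and a degree induction shows that the part of
`ℂ[x] ⧸ I(W)` of diagonal multidegree `(d, …, d)` is a finite module over `ℂ[y]`, acting by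
`yⱼ ↦ μⱼ`: this is the elimination theory behind "the image of a projective variety is closed".

If `p ≠ 0` lies in the Zariski closure of the image of `W` but has empty fibre, then
`1 ∈ I(W) + (μⱼ - pⱼ)`; taking diagonal parts gives `1 ∈ 𝔪_p • D` for that finite module `D`, and
Nakayama produces `g` with `g(p) = 1` and `g(μ) ∈ I(W)`, i.e. `g` vanishes on the image but not
at `p`. Hence `X^{⋆r}` consists of actual Hadamard products and `0`, and the rank statement is
immediate.
-/

namespace MvPolynomial

section WeightedRestrict

variable {σ M R : Type*} [CommSemiring R] [AddCommMonoid M]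

open Classical in
noncomputable def weightedRestrict (w : σ → M) (S : Set M) :
    MvPolynomial σ R →ₗ[R] MvPolynomial σ R :=
  (AddMonoidAlgebra.coeffLinearEquiv _).symm.toLinearMap ∘ₗ Submodule.subtype _ ∘ₗ
    Finsupp.restrictDom _ _ {d | Finsupp.weight w d ∈ S} ∘ₗ
    (AddMonoidAlgebra.coeffLinearEquiv _).toLinearMap

variable {w : σ → M} {S : Set M}

theorem coeff_weightedRestrict [DecidablePred (· ∈ S)] (φ : MvPolynomial σ R) (d : σ →₀ ℕ) :
    coeff d (weightedRestrict w S φ) = if Finsupp.weight w d ∈ S then coeff d φ else 0 := by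
  simp [weightedRestrict, MvPolynomial, coeff, Finsupp.filter_apply]

theorem weightedRestrict_monomial_mul (u : σ →₀ ℕ) (a : R) (φ : MvPolynomial σ R) :
    weightedRestrict w S (monomial u a * φ) =
      monomial u a * weightedRestrict w ((Finsupp.weight w u + ·) ⁻¹' S) φ := by
  classical
  ext d
  rw [coeff_weightedRestrict, coeff_monomial_mul', coeff_monomial_mul']
  split_ifs <;> simp_all [coeff_weightedRestrict, ← map_add, add_tsub_cancel_of_le]

theorem weightedRestrict_monomial {u : σ →₀ ℕ} (hu : Finsupp.weight w u ∈ S) (a : R) :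
    weightedRestrict w S (monomial u a) = monomial u a := by
  classical
  ext d
  rw [coeff_weightedRestrict, coeff_monomial]
  split_ifs <;> simp_all

theorem weight_mem_of_mem_support_weightedRestrict {φ : MvPolynomial σ R} {d : σ →₀ ℕ}
    (hd : d ∈ (weightedRestrict w S φ).support) : Finsupp.weight w d ∈ S := by
  classical
  by_contra h
  exact mem_support_iff.mp hd (by rw [coeff_weightedRestrict, if_neg h])

theorem weightedRestrict_eq_sum [DecidableEq M] [DecidablePred (· ∈ S)] (φ : MvPolynomial σ R) :
    weightedRestrict w S φ =
      ∑ n ∈ (φ.support.image (Finsupp.weight w)).filter (· ∈ S),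
        weightedHomogeneousComponent w n φ := by
  ext d
  rw [coeff_weightedRestrict, coeff_sum]
  simp only [coeff_weightedHomogeneousComponent, Finset.sum_ite_eq]
  by_cases hd : coeff d φ = 0
  · simp [hd]
  · have : Finsupp.weight w d ∈ φ.support.image (Finsupp.weight w) :=
      Finset.mem_image_of_mem _ (mem_support_iff.mpr hd)
    simp [this]

attribute [local instance] weightedGradedAlgebra

theorem weightedRestrict_mem_of_isHomogeneous [DecidableEq M] {I : Ideal (MvPolynomial σ R)}
    (hI : I.IsHomogeneous (weightedHomogeneousSubmodule R w)) {φ : MvPolynomial σ R}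
    (hφ : φ ∈ I) : weightedRestrict w S φ ∈ I := by
  classical
  rw [weightedRestrict_eq_sum]
  exact Ideal.sum_mem _ fun n _ => weightedHomogeneousComponent_mem_of_mem R w hI hφ n

end WeightedRestrict

section Torus

variable {σ ι K : Type*} [Fintype ι] [Field K]

theorem finsuppProd_pow_eq_prod_pow_weight (w : σ → ι → ℕ) (c : ι → K) (d : σ →₀ ℕ) :
    (d.prod fun s e => (∏ i, c i ^ w s i) ^ e) = ∏ i, c i ^ Finsupp.weight w d i := by
  simp only [Finsupp.prod, Finsupp.weight_apply, Finsupp.sum, Finset.sum_apply, Pi.smul_apply,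
    smul_eq_mul, ← Finset.prod_pow, ← pow_mul, ← Finset.prod_pow_eq_pow_sum]
  rw [Finset.prod_comm]
  simp_rw [mul_comm]

theorem IsWeightedHomogeneous.eval_torus_smul {w : σ → ι → ℕ} {φ : MvPolynomial σ K}
    {n : ι → ℕ} (hφ : φ.IsWeightedHomogeneous w n) (c : ι → K) (x : σ → K) :
    eval (fun s => (∏ i, c i ^ w s i) * x s) φ = (∏ i, c i ^ n i) * eval x φ := by
  induction hφ using IsWeightedHomogeneous.induction_on with
  | zero => simp
  | add p q _ _ hp hq => simp only [map_add, hp, hq, mul_add]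
  | monomial d r hd =>
    simp only [eval_monomial, mul_pow, Finsupp.prod_mul, finsuppProd_pow_eq_prod_pow_weight, hd]
    ring

attribute [local instance] weightedGradedAlgebra

theorem isHomogeneous_vanishingIdeal_of_torus_smul_mem [Infinite K] {w : σ → ι → ℕ}
    {W : Set (σ → K)}
    (hW : ∀ x ∈ W, ∀ c : ι → K, (∀ i, c i ≠ 0) → (fun s => (∏ i, c i ^ w s i) * x s) ∈ W) :
    (vanishingIdeal K W).IsHomogeneous (weightedHomogeneousSubmodule K w) := by
  intro n f hf
  rw [show (DirectSum.decompose (weightedHomogeneousSubmodule K w) f n : MvPolynomial σ K) =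
    weightedHomogeneousComponent w n f from weightedDecomposition.decompose'_apply K w f n]
  classical
  simp only [mem_vanishingIdeal_iff, aeval_eq_eval] at hf ⊢
  intro x hx
  set F := f.support.image (Finsupp.weight w)
  by_cases hn : n ∈ F
  swap
  · rw [weightedHomogeneousComponent_eq_zero_of_notMem w f n hn, map_zero]
  have hsum : ∑ m ∈ F, weightedHomogeneousComponent w m f = f := by
    rw [← finsum_eq_sum_of_support_subset _ fun m hm => ?_, sum_weightedHomogeneousComponent]
    by_contra hmF
    exact hm (weightedHomogeneousComponent_eq_zero_of_notMem w f m hmF)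
  -- `c ↦ f (c • x)` as a polynomial on the torus: its coefficients are the values at `x` of the
  -- weighted homogeneous components of `f`.
  let g : MvPolynomial ι K := ∑ m ∈ F,
    monomial (Finsupp.equivFunOnFinite.symm m) (eval x (weightedHomogeneousComponent w m f))
  have hg : g = 0 := by
    refine funext_set (fun _ => {0}ᶜ) (fun _ => (Set.finite_singleton 0).infinite_compl)
      fun c hc => ?_
    calc eval c g = eval (fun s => (∏ i, c i ^ w s i) * x s) f := by
          conv_rhs => rw [← hsum]
          simp only [g, map_sum, eval_monomial, Finsupp.prod_fintype _ _ (fun i => pow_zero _),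
            Finsupp.coe_equivFunOnFinite_symm,
            (weightedHomogeneousComponent_isWeightedHomogeneous _ f).eval_torus_smul]
          simp_rw [mul_comm]
      _ = eval c 0 := by rw [hf _ (hW x hx c fun i => hc i trivial), map_zero]
  simpa [g, coeff_sum, coeff_monomial, hn] using
    congrArg (coeff (Finsupp.equivFunOnFinite.symm n)) hg

end Torus

end MvPolynomial

theorem Submodule.le_smul_of_one_mem_smul {R A : Type*} [CommRing R] [CommRing A] [Algebra R A]
    {𝔪 : Ideal R} {D : Submodule R A} (hD : D * D ≤ D) (h1 : 1 ∈ 𝔪 • D) : D ≤ 𝔪 • D := by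
  intro z hz
  have hmap : D.map (LinearMap.mulLeft R z) ≤ D :=
    Submodule.map_le_iff_le_comap.mpr fun y hy => hD (Submodule.mul_mem_mul hz hy)
  have : z ∈ (𝔪 • D).map (LinearMap.mulLeft R z) := ⟨1, h1, mul_one z⟩
  rw [Submodule.map_smul''] at this
  exact Submodule.smul_mono le_rfl hmap this

namespace Hadamard

open MvPolynomial

section Degrees

variable (ι τ K : Type*)

def blockWeight [DecidableEq ι] (s : ι × τ) : ι → ℕ := Pi.single s.1 1

def diagonalDegrees : Set (ι → ℕ) := Set.range (Function.const ι)

noncomputable def hadamardMonomial [Fintype ι] [CommSemiring K] (j : τ) :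
    MvPolynomial (ι × τ) K :=
  ∏ i, X (i, j)

variable {ι τ K}

noncomputable def transversal [Fintype ι] (J : ι → τ) : (ι × τ) →₀ ℕ :=
  ∑ i, Finsupp.single (i, J i) 1

theorem weight_blockWeight_apply [Fintype ι] [DecidableEq ι] [Fintype τ] (d : (ι × τ) →₀ ℕ)
    (i : ι) : Finsupp.weight (blockWeight ι τ) d i = ∑ j, d (i, j) := by
  simp only [Finsupp.weight_eq_sum, blockWeight, Finset.sum_apply, Pi.smul_apply, Pi.single_apply,
    Fintype.sum_prod_type, smul_eq_mul, mul_ite, mul_one, mul_zero]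
  rw [Finset.sum_eq_single i (fun i' _ h => by simp [Ne.symm h]) (by simp)]
  simp

theorem prod_pow_blockWeight [Fintype ι] [DecidableEq ι] [CommMonoid K] (c : ι → K)
    (s : ι × τ) : ∏ i, c i ^ blockWeight ι τ s i = c s.1 := by
  simp [blockWeight, Pi.single_apply]

theorem zero_mem_diagonalDegrees [DecidableEq ι] :
    Finsupp.weight (blockWeight ι τ) (0 : (ι × τ) →₀ ℕ) ∈ diagonalDegrees ι :=
  ⟨0, (map_zero _).symm⟩

theorem preimage_one_add_diagonalDegrees : (1 + ·) ⁻¹' diagonalDegrees ι = diagonalDegrees ι := by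
  ext δ
  constructor
  · rintro ⟨d, hd⟩
    exact ⟨d - 1, funext fun i => by have := congrFun hd i; simp at this ⊢; omega⟩
  · rintro ⟨d, rfl⟩
    exact ⟨d + 1, funext fun i => by simp; omega⟩

theorem preimage_one_add_singleton_const {d : ℕ} (hd : d ≠ 0) :
    (1 + ·) ⁻¹' {Function.const ι d} = {Function.const ι (d - 1)} := by
  ext δ
  simp only [Set.mem_preimage, Set.mem_singleton_iff, funext_iff, Pi.add_apply, Pi.one_apply,
    Function.const_apply]
  exact forall_congr' fun i => by omega

section Transversal

variable [Fintype ι]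

theorem transversal_apply [DecidableEq ι] [DecidableEq τ] (J : ι → τ) (i : ι) (j : τ) :
    transversal J (i, j) = if J i = j then 1 else 0 := by
  simp only [transversal, Finsupp.finsetSum_apply, Finsupp.single_apply, Prod.mk.injEq]
  rw [Finset.sum_eq_single i (fun i' _ h => by simp [h]) (by simp)]
  simp

theorem weight_transversal [DecidableEq ι] (J : ι → τ) :
    Finsupp.weight (blockWeight ι τ) (transversal J) = 1 := by
  simp [transversal, Finsupp.weight_single, blockWeight, Finset.univ_sum_single]
  rfl

theorem monomial_transversal [CommSemiring K] (J : ι → τ) :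
    monomial (transversal J) (1 : K) = ∏ i, X (i, J i) := by
  simp [transversal, monomial_sum_one, X]

theorem exists_smul_transversal_le [DecidableEq ι] [Fintype τ] {m : (ι × τ) →₀ ℕ} {d e : ℕ}
    (hm : Finsupp.weight (blockWeight ι τ) m = Function.const ι d)
    (hd : e * Fintype.card τ < d) : ∃ J : ι → τ, e • transversal J ≤ m := by
  classical
  have : ∀ i, ∃ j, e ≤ m (i, j) := by
    intro i
    by_contra! h
    have : d ≤ Fintype.card τ * (e - 1) :=
      calc d = ∑ j, m (i, j) := by rw [← weight_blockWeight_apply, hm, Function.const_apply]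
        _ ≤ ∑ _j : τ, (e - 1) := Finset.sum_le_sum fun j _ => by have := h j; omega
        _ = Fintype.card τ * (e - 1) := by simp
    have : Fintype.card τ * (e - 1) ≤ e * Fintype.card τ := by
      rw [mul_comm]
      exact Nat.mul_le_mul_right _ (Nat.sub_le _ _)
    omega
  choose J hJ using this
  refine ⟨J, Finsupp.le_def.mpr fun ⟨i, j⟩ => ?_⟩
  simp only [Finsupp.smul_apply, smul_eq_mul, transversal_apply]
  split_ifs with h
  · simpa [← h] using hJ i
  · simp

theorem hadamardMonomial_eq_monomial [CommSemiring K] (j : τ) :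
    hadamardMonomial ι τ K j = monomial (transversal fun _ => j) 1 :=
  (monomial_transversal _).symm

variable [DecidableEq ι] [CommSemiring K]

theorem weightedRestrict_hadamardMonomial_mul (S : Set (ι → ℕ)) (j : τ)
    (φ : MvPolynomial (ι × τ) K) :
    weightedRestrict (blockWeight ι τ) S (hadamardMonomial ι τ K j * φ) =
      hadamardMonomial ι τ K j * weightedRestrict (blockWeight ι τ) ((1 + ·) ⁻¹' S) φ := by
  rw [hadamardMonomial_eq_monomial, weightedRestrict_monomial_mul, weight_transversal]

theorem weightedRestrict_diagonalDegrees_bind₁_mul (g : MvPolynomial τ K)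
    (φ : MvPolynomial (ι × τ) K) :
    weightedRestrict (blockWeight ι τ) (diagonalDegrees ι)
        (bind₁ (hadamardMonomial ι τ K) g * φ) =
      bind₁ (hadamardMonomial ι τ K) g *
        weightedRestrict (blockWeight ι τ) (diagonalDegrees ι) φ := by
  induction g using MvPolynomial.induction_on generalizing φ with
  | C a => rw [bind₁_C_right, C_mul', C_mul', map_smul]
  | add g₁ g₂ h₁ h₂ => simp only [map_add, add_mul, h₁, h₂]
  | mul_X g j h =>
    rw [map_mul (bind₁ _), bind₁_X_right, mul_assoc, h, weightedRestrict_hadamardMonomial_mul,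
      preimage_one_add_diagonalDegrees, mul_assoc]

end Transversal

end Degrees

section Quotient

variable {ι τ K : Type*} [Fintype ι] [Field K]

noncomputable abbrev hadamardAlgebra (I : Ideal (MvPolynomial (ι × τ) K)) :
    Algebra (MvPolynomial τ K) (MvPolynomial (ι × τ) K ⧸ I) :=
  ((Ideal.Quotient.mk I).comp (bind₁ (hadamardMonomial ι τ K)).toRingHom).toAlgebra

attribute [local instance] hadamardAlgebra

-- Registered on its own so that instance search does not first try the generic module
-- structures on a quotient.
noncomputable abbrev hadamardModule (I : Ideal (MvPolynomial (ι × τ) K)) :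
    Module (MvPolynomial τ K) (MvPolynomial (ι × τ) K ⧸ I) :=
  (hadamardAlgebra I).toModule

attribute [local instance] hadamardModule weightedGradedAlgebra

variable {I : Ideal (MvPolynomial (ι × τ) K)}

theorem smul_mk (g : MvPolynomial τ K) (f : MvPolynomial (ι × τ) K) :
    g • Ideal.Quotient.mk I f = Ideal.Quotient.mk I (bind₁ (hadamardMonomial ι τ K) g * f) := by
  rw [Algebra.smul_def]
  rfl

theorem mk_hadamardMonomial_mul (j : τ) (f : MvPolynomial (ι × τ) K) :
    Ideal.Quotient.mk I (hadamardMonomial ι τ K j * f) =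
      (X j : MvPolynomial τ K) • Ideal.Quotient.mk I f := by
  rw [smul_mk, bind₁_X_right]

theorem exists_pow_transversal_mem [Finite τ] {I' : Ideal (MvPolynomial (ι × τ) K)}
    (h : ∀ J : ι → τ, monomial (transversal J) (1 : K) ∈ I'.radical) :
    ∃ e, ∀ J : ι → τ, monomial (transversal J) (1 : K) ^ e ∈ I' := by
  obtain ⟨e, he⟩ := Ideal.exists_pow_le_of_le_radical_of_fg
    (Ideal.span_le.mpr (Set.range_subset_iff.mpr h)) (Submodule.fg_span (Set.finite_range _))
  exact ⟨e, fun J => he (Ideal.pow_mem_pow (Ideal.subset_span (Set.mem_range_self J)) e)⟩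

variable [DecidableEq ι]

noncomputable def degreeSpan (I : Ideal (MvPolynomial (ι × τ) K)) (S : Set (ι → ℕ)) :
    Submodule (MvPolynomial τ K) (MvPolynomial (ι × τ) K ⧸ I) :=
  Submodule.span _ ((fun m => Ideal.Quotient.mk I (monomial m 1)) ''
    {m | Finsupp.weight (blockWeight ι τ) m ∈ S})

theorem mk_monomial_mem_degreeSpan {S : Set (ι → ℕ)} {m : (ι × τ) →₀ ℕ}
    (hm : Finsupp.weight (blockWeight ι τ) m ∈ S) :
    Ideal.Quotient.mk I (monomial m 1) ∈ degreeSpan I S :=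
  Submodule.subset_span ⟨m, hm, rfl⟩

theorem degreeSpan_mono {S T : Set (ι → ℕ)} (h : S ⊆ T) : degreeSpan I S ≤ degreeSpan I T :=
  Submodule.span_mono (Set.image_mono fun _ hm => h hm)

theorem mk_weightedRestrict_mem_degreeSpan (S : Set (ι → ℕ)) (f : MvPolynomial (ι × τ) K) :
    Ideal.Quotient.mk I (weightedRestrict (blockWeight ι τ) S f) ∈ degreeSpan I S := by
  set f' := weightedRestrict (blockWeight ι τ) S f
  rw [f'.as_sum, map_sum]
  refine Submodule.sum_mem _ fun m hm => ?_
  have : Ideal.Quotient.mk I (monomial m (coeff m f')) =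
      (C (coeff m f') : MvPolynomial τ K) • Ideal.Quotient.mk I (monomial m 1) := by
    rw [smul_mk, bind₁_C_right, C_mul_monomial, mul_one]
  rw [this]
  exact Submodule.smul_mem _ _
    (mk_monomial_mem_degreeSpan (weight_mem_of_mem_support_weightedRestrict hm))

theorem degreeSpan_diagonalDegrees_mul_le :
    degreeSpan I (diagonalDegrees ι) * degreeSpan I (diagonalDegrees ι) ≤
      degreeSpan I (diagonalDegrees ι) := by
  rw [degreeSpan, Submodule.span_mul_span]
  refine Submodule.span_mono ?_
  rintro _ ⟨_, ⟨m₁, ⟨d₁, h₁⟩, rfl⟩, _, ⟨m₂, ⟨d₂, h₂⟩, rfl⟩, rfl⟩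
  refine ⟨m₁ + m₂, ⟨d₁ + d₂, ?_⟩, ?_⟩
  · simp only [map_add, ← h₁, ← h₂]
    rfl
  · simp only [← map_mul, monomial_mul, mul_one]

theorem degreeSpan_const_image_Iio_fg [Fintype τ] (B : ℕ) :
    (degreeSpan I (Function.const ι '' Set.Iio B)).FG := by
  classical
  refine Submodule.fg_span (Set.Finite.image _ ((Set.finite_Icc 0
    (Finsupp.equivFunOnFinite.symm fun _ => B)).subset fun m ⟨d, hd, hm⟩ =>
      ⟨zero_le, Finsupp.le_def.mpr fun s => ?_⟩))
  calc m s ≤ ∑ j, m (s.1, j) :=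
        Finset.single_le_sum (f := fun j => m (s.1, j)) (by simp) (Finset.mem_univ s.2)
    _ = d := by rw [← weight_blockWeight_apply, ← hm, Function.const_apply]
    _ ≤ B := le_of_lt hd

variable [Fintype τ]

-- Write `u_J ^ e = h + ∑ⱼ μⱼ qⱼ` with `h ∈ I`, multiply by `x ^ (m - e • J)` and keep the part of
-- multidegree `(d, …, d)`.
theorem mk_monomial_mem_degreeSpan_pred
    (hI : I.IsHomogeneous (weightedHomogeneousSubmodule K (blockWeight ι τ))) {e : ℕ}
    (he : ∀ J : ι → τ, monomial (transversal J) (1 : K) ^ e ∈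
      I ⊔ Ideal.span (Set.range (hadamardMonomial ι τ K)))
    {m : (ι × τ) →₀ ℕ} {d : ℕ} (hd : d ≠ 0)
    (hm : Finsupp.weight (blockWeight ι τ) m = Function.const ι d)
    {J : ι → τ} (hJ : e • transversal J ≤ m) :
    Ideal.Quotient.mk I (monomial m 1) ∈ degreeSpan I {Function.const ι (d - 1)} := by
  obtain ⟨h, hh, _, hb, hsum⟩ := Submodule.mem_sup.mp (he J)
  obtain ⟨q, rfl⟩ := Ideal.mem_span_range_iff_exists_fun.mp hb
  set m' := m - e • transversal J
  have hsplit : monomial m (1 : K) =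
      h * monomial m' 1 + ∑ j, hadamardMonomial ι τ K j * (q j * monomial m' 1) := by
    rw [show monomial m (1 : K) = monomial (transversal J) 1 ^ e * monomial m' 1 by
      rw [monomial_pow, one_pow, monomial_mul, one_mul, add_tsub_cancel_of_le hJ],
      ← hsum, add_mul, Finset.sum_mul]
    exact congrArg _ (Finset.sum_congr rfl fun j _ => by ring)
  have key := congrArg (fun f => Ideal.Quotient.mk I
    (weightedRestrict (blockWeight ι τ) {Function.const ι d} f)) hsplit
  simp only [weightedRestrict_monomial (Set.mem_singleton_iff.mpr hm), map_add, map_sum,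
    weightedRestrict_hadamardMonomial_mul, preimage_one_add_singleton_const hd,
    mk_hadamardMonomial_mul, zero_add, Ideal.Quotient.eq_zero_iff_mem.mpr
      (weightedRestrict_mem_of_isHomogeneous hI (I.mul_mem_right _ hh))] at key
  rw [key]
  exact Submodule.sum_mem _ fun j _ =>
    Submodule.smul_mem _ _ (mk_weightedRestrict_mem_degreeSpan _ _)

theorem mk_monomial_mem_degreeSpan_Iio
    (hI : I.IsHomogeneous (weightedHomogeneousSubmodule K (blockWeight ι τ))) {e : ℕ}
    (he : ∀ J : ι → τ, monomial (transversal J) (1 : K) ^ e ∈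
      I ⊔ Ideal.span (Set.range (hadamardMonomial ι τ K)))
    (d : ℕ) {m : (ι × τ) →₀ ℕ} (hm : Finsupp.weight (blockWeight ι τ) m = Function.const ι d) :
    Ideal.Quotient.mk I (monomial m 1) ∈
      degreeSpan I (Function.const ι '' Set.Iio (e * Fintype.card τ + 1)) := by
  induction d using Nat.strong_induction_on generalizing m with
  | _ d ih =>
  by_cases hd : d < e * Fintype.card τ + 1
  · exact mk_monomial_mem_degreeSpan ⟨d, hd, hm.symm⟩
  · obtain ⟨J, hJ⟩ := exists_smul_transversal_le (e := e) hm (by omega)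
    refine Submodule.span_le.mpr ?_ (mk_monomial_mem_degreeSpan_pred hI he (by omega) hm hJ)
    rintro _ ⟨m', hm', rfl⟩
    exact ih (d - 1) (by omega) hm'

theorem degreeSpan_diagonalDegrees_fg
    (hI : I.IsHomogeneous (weightedHomogeneousSubmodule K (blockWeight ι τ))) {e : ℕ}
    (he : ∀ J : ι → τ, monomial (transversal J) (1 : K) ^ e ∈
      I ⊔ Ideal.span (Set.range (hadamardMonomial ι τ K))) :
    (degreeSpan I (diagonalDegrees ι)).FG := by
  have hle : degreeSpan I (diagonalDegrees ι) ≤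
      degreeSpan I (Function.const ι '' Set.Iio (e * Fintype.card τ + 1)) := by
    refine Submodule.span_le.mpr ?_
    rintro _ ⟨m, ⟨d, hd⟩, rfl⟩
    exact mk_monomial_mem_degreeSpan_Iio hI he d hd.symm
  rw [le_antisymm hle (degreeSpan_mono (Set.image_subset_range _ _))]
  exact degreeSpan_const_image_Iio_fg _

theorem one_mem_ker_smul_degreeSpan
    (hI : I.IsHomogeneous (weightedHomogeneousSubmodule K (blockWeight ι τ))) {p : τ → K}
    (h1 : 1 ∈ I ⊔ Ideal.span (Set.range fun j => hadamardMonomial ι τ K j - C (p j))) :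
    (1 : MvPolynomial (ι × τ) K ⧸ I) ∈
      RingHom.ker (eval p) • degreeSpan I (diagonalDegrees ι) := by
  obtain ⟨h, hh, _, hb, hsum⟩ := Submodule.mem_sup.mp h1
  obtain ⟨q, rfl⟩ := Ideal.mem_span_range_iff_exists_fun.mp hb
  have hμ : ∀ j, q j * (hadamardMonomial ι τ K j - C (p j)) =
      bind₁ (hadamardMonomial ι τ K) (X j - C (p j)) * q j := by
    simp [mul_comm]
  have hone : weightedRestrict (blockWeight ι τ) (diagonalDegrees ι)
      (1 : MvPolynomial (ι × τ) K) = 1 :=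
    weightedRestrict_monomial zero_mem_diagonalDegrees 1
  have key := congrArg (fun f => Ideal.Quotient.mk I
    (weightedRestrict (blockWeight ι τ) (diagonalDegrees ι) f)) hsum
  simp only [map_add, map_sum, hμ, weightedRestrict_diagonalDegrees_bind₁_mul, ← smul_mk,
    Ideal.Quotient.eq_zero_iff_mem.mpr (weightedRestrict_mem_of_isHomogeneous hI hh), zero_add,
    hone, map_one] at key
  rw [← key]
  refine Submodule.sum_mem _ fun j _ => Submodule.smul_mem_smul ?_
    (mk_weightedRestrict_mem_degreeSpan _ _)
  simp

theorem exists_eval_eq_one_and_bind₁_mem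
    (hI : I.IsHomogeneous (weightedHomogeneousSubmodule K (blockWeight ι τ)))
    (hrad : ∀ J : ι → τ, monomial (transversal J) (1 : K) ∈
      (I ⊔ Ideal.span (Set.range (hadamardMonomial ι τ K))).radical) {p : τ → K}
    (h1 : 1 ∈ I ⊔ Ideal.span (Set.range fun j => hadamardMonomial ι τ K j - C (p j))) :
    ∃ g : MvPolynomial τ K, eval p g = 1 ∧ bind₁ (hadamardMonomial ι τ K) g ∈ I := by
  obtain ⟨e, he⟩ := exists_pow_transversal_mem hrad
  obtain ⟨g, hg1, hg⟩ := Submodule.exists_sub_one_mem_and_smul_eq_zero_of_fg_of_le_smul _ _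
    (degreeSpan_diagonalDegrees_fg hI he)
    (Submodule.le_smul_of_one_mem_smul degreeSpan_diagonalDegrees_mul_le
      (one_mem_ker_smul_degreeSpan hI h1))
  refine ⟨g, by simpa [sub_eq_zero] using hg1, ?_⟩
  have := hg _ (mk_monomial_mem_degreeSpan (I := I) (m := 0) zero_mem_diagonalDegrees)
  rwa [smul_mk, ← one_def, mul_one, Ideal.Quotient.eq_zero_iff_mem] at this

end Quotient

section ClosedImage

variable {ι τ K : Type*} [Fintype ι] [Fintype τ] [Field K] [IsAlgClosed K] {W : Set (ι × τ → K)}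

theorem transversal_mem_radical (hW : zeroLocus K (vanishingIdeal K W) ⊆ W)
    (hW₀ : ∀ x ∈ W, (∀ j, ∏ i, x (i, j) = 0) → ∃ i, ∀ j, x (i, j) = 0) (J : ι → τ) :
    monomial (transversal J) (1 : K) ∈
      (vanishingIdeal K W ⊔ Ideal.span (Set.range (hadamardMonomial ι τ K))).radical := by
  rw [← vanishingIdeal_zeroLocus_eq_radical (K := K), mem_vanishingIdeal_iff]
  intro x hx
  obtain ⟨i, hi⟩ := hW₀ x (hW (zeroLocus_anti_mono le_sup_left hx)) fun j => by
    simpa [hadamardMonomial] using hx _ (Ideal.mem_sup_right (Ideal.subset_span ⟨j, rfl⟩))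
  simpa [monomial_transversal] using Finset.prod_eq_zero (Finset.mem_univ i) (hi (J i))

theorem exists_forall_prod_eq_of_forall_eval_eq_zero [DecidableEq ι]
    (hW : zeroLocus K (vanishingIdeal K W) ⊆ W)
    (hW₀ : ∀ x ∈ W, (∀ j, ∏ i, x (i, j) = 0) → ∃ i, ∀ j, x (i, j) = 0)
    (hsmul : ∀ x ∈ W, ∀ c : ι → K, (∀ i, c i ≠ 0) → (fun s => c s.1 * x s) ∈ W) {p : τ → K}
    (hp : ∀ g : MvPolynomial τ K, (∀ x ∈ W, eval (fun j => ∏ i, x (i, j)) g = 0) →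
      eval p g = 0) :
    ∃ x ∈ W, ∀ j, ∏ i, x (i, j) = p j := by
  by_contra! hcon
  set I' := vanishingIdeal K W ⊔
    Ideal.span (Set.range fun j => hadamardMonomial ι τ K j - C (p j))
  have hempty : zeroLocus K I' = ∅ := by
    refine Set.eq_empty_of_forall_notMem fun x hx => ?_
    obtain ⟨j, hj⟩ := hcon x (hW (zeroLocus_anti_mono le_sup_left hx))
    have := hx _ (Ideal.mem_sup_right (Ideal.subset_span ⟨j, rfl⟩))
    exact hj (by simpa [hadamardMonomial, sub_eq_zero] using this)
  have h1 : (1 : MvPolynomial (ι × τ) K) ∈ I' := by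
    have := vanishingIdeal_zeroLocus_eq_radical (K := K) I'
    rw [hempty, vanishingIdeal_empty, eq_comm, Ideal.radical_eq_top] at this
    simp [this]
  have hI := isHomogeneous_vanishingIdeal_of_torus_smul_mem (w := blockWeight ι τ)
    fun x hx c hc => by simpa only [prod_pow_blockWeight] using hsmul x hx c hc
  obtain ⟨g, hg1, hgI⟩ :=
    exists_eval_eq_one_and_bind₁_mem hI (transversal_mem_radical hW hW₀) h1
  have : eval p g = 0 := hp g fun x hx => by
    simpa [aeval_bind₁, hadamardMonomial] using hgI x hx
  simp [hg1] at this

end ClosedImage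

end Hadamard

section HadamardProducts

open Hadamard Filter Topology

theorem subset_zclosure {n : ℕ} (S : Set (Fin n → ℂ)) : S ⊆ zclosure S :=
  fun v hv _ hf => hf v hv

theorem zero_mem_zclosure_of_smul_mem {n : ℕ} {S : Set (Fin n → ℂ)} (hS : S.Nonempty)
    (hsmul : ∀ v ∈ S, ∀ c : ℂ, c ≠ 0 → c • v ∈ S) : 0 ∈ zclosure S := by
  intro f hf
  obtain ⟨v, hv⟩ := hS
  have hlim : Tendsto (fun c : ℂ => eval (c • v) f) (𝓝[≠] 0) (𝓝 (eval ((0 : ℂ) • v) f)) :=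
    ((continuous_eval f).comp (continuous_id.smul continuous_const)).continuousAt.tendsto.mono_left
      nhdsWithin_le_nhds
  have hzero : (fun c : ℂ => eval (c • v) f) =ᶠ[𝓝[≠] 0] fun _ => 0 :=
    eventually_nhdsWithin_of_forall fun c hc => hf _ (hsmul v hv c hc)
  rw [← zero_smul ℂ v]
  exact tendsto_nhds_unique hlim (tendsto_const_nhds.congr' hzero.symm)

theorem hprodSet_nonempty {n : ℕ} {X : Set (Fin n → ℂ)} (hX : X.Nonempty) (r : ℕ) :
    (hprodSet X r).Nonempty :=
  let ⟨v, hv⟩ := hX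
  ⟨_, fun _ => v, fun _ => hv, 1, one_ne_zero, rfl⟩

theorem smul_mem_hprodSet {n r : ℕ} {X : Set (Fin n → ℂ)} {v : Fin n → ℂ}
    (hv : v ∈ hprodSet X r) {c : ℂ} (hc : c ≠ 0) : c • v ∈ hprodSet X r := by
  obtain ⟨f, hf, c', hc', rfl⟩ := hv
  exact ⟨f, hf, c * c', mul_ne_zero hc hc', smul_smul c c' _⟩

variable {ι : Type*} {n : ℕ}

def blockSet (Y : Set (Fin n → ℂ)) : Set (ι × Fin n → ℂ) := {x | ∀ i, Function.curry x i ∈ Y}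

theorem zeroLocus_vanishingIdeal_blockSet_zclosure_subset (S : Set (Fin n → ℂ)) :
    zeroLocus ℂ (vanishingIdeal ℂ (blockSet (ι := ι) (zclosure S))) ⊆ blockSet (zclosure S) := by
  intro x hx i f hf
  have hmem : rename (fun j => (i, j)) f ∈ vanishingIdeal ℂ (blockSet (ι := ι) (zclosure S)) :=
    fun y hy => (eval_rename _ _ _).trans (hy i f hf)
  exact (eval_rename _ _ _).symm.trans (hx _ hmem)

theorem smul_mem_blockSet {Y : Set (Fin n → ℂ)} (hY : ∀ v ∈ Y, ∀ c : ℂ, c ≠ 0 → c • v ∈ Y)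
    {x : ι × Fin n → ℂ} (hx : x ∈ blockSet Y) (c : ι → ℂ) (hc : ∀ i, c i ≠ 0) :
    (fun s => c s.1 * x s) ∈ blockSet Y :=
  fun i => hY _ (hx i) (c i) (hc i)

theorem exists_forall_eq_zero_of_forall_prod_eq_zero [Fintype ι] {k : ℕ} {X : Set (Fin n → ℂ)}
    (hzero : ∀ v ∈ X, Nat.card {j : Fin n // v j = 0} ≤ k) (hk : Fintype.card ι * k < n)
    {x : ι × Fin n → ℂ} (hx : x ∈ blockSet (X ∪ {0})) (hprod : ∀ j, ∏ i, x (i, j) = 0) :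
    ∃ i, ∀ j, x (i, j) = 0 := by
  classical
  by_contra! h
  have hX : ∀ i, Function.curry x i ∈ X := fun i => (hx i).resolve_right fun h0 => by
    obtain ⟨j, hj⟩ := h i
    exact hj (congrFun h0 j)
  have hcover : (Finset.univ : Finset (Fin n)) ⊆
      Finset.univ.biUnion fun i => Finset.univ.filter fun j => x (i, j) = 0 := fun j _ => by
    obtain ⟨i, -, hi⟩ := Finset.prod_eq_zero_iff.mp (hprod j)
    simpa using ⟨i, hi⟩
  have hcard : ∀ i, (Finset.univ.filter fun j => x (i, j) = 0).card ≤ k := fun i => by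
    simpa [Nat.card_eq_fintype_card, Fintype.card_subtype] using hzero _ (hX i)
  have := (Finset.card_le_card hcover).trans
    (Finset.card_biUnion_le.trans (Finset.sum_le_sum fun i _ => hcard i))
  simp at this
  omega

theorem exists_mem_blockSet_of_mem_hprodSet {X : Set (Fin n → ℂ)}
    (hcone : ∀ v ∈ X, ∀ c : ℂ, c ≠ 0 → c • v ∈ X) {r : ℕ} (hr : r ≠ 0) {v : Fin n → ℂ}
    (hv : v ∈ hprodSet X r) : ∃ x ∈ blockSet (ι := Fin r) X, ∀ j, ∏ i, x (i, j) = v j := by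
  obtain ⟨f, hf, c, hc, rfl⟩ := hv
  let i₀ : Fin r := ⟨0, Nat.pos_of_ne_zero hr⟩
  refine ⟨Function.uncurry (Function.update f i₀ (c • f i₀)),
    Function.forall_update_iff _ (p := fun _ v => v ∈ X) |>.mpr
      ⟨hcone _ (hf i₀) c hc, fun i _ => hf i⟩, fun j => ?_⟩
  change ∏ i, Function.update f i₀ (c • f i₀) i j = _
  rw [← Finset.prod_apply, Finset.prod_update_of_mem (Finset.mem_univ i₀), smul_mul_assoc,
    ← Finset.prod_eq_mul_prod_sdiff_singleton_of_mem (Finset.mem_univ i₀) f]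

theorem mem_hprodSet_of_mem_hpow {k r : ℕ} {X : Set (Fin n → ℂ)}
    (hcone : ∀ v ∈ X, ∀ c : ℂ, c ≠ 0 → c • v ∈ X) (hcl : zclosure X = X ∪ {0})
    (hzero : ∀ v ∈ X, Nat.card {j : Fin n // v j = 0} ≤ k) (hr : r ≠ 0) (hrk : r * k < n)
    {p : Fin n → ℂ} (hp0 : p ≠ 0) (hp : p ∈ hpow X r) : p ∈ hprodSet X r := by
  have hcone₀ : ∀ v ∈ zclosure X, ∀ c : ℂ, c ≠ 0 → c • v ∈ zclosure X := by
    rw [hcl]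
    rintro v (hv | rfl) c hc
    exacts [Or.inl (hcone v hv c hc), Or.inr (smul_zero c)]
  obtain ⟨x, hx, hxp⟩ := exists_forall_prod_eq_of_forall_eval_eq_zero
    (zeroLocus_vanishingIdeal_blockSet_zclosure_subset (ι := Fin r) X)
    (fun x hx => exists_forall_eq_zero_of_forall_prod_eq_zero hzero (by simpa using hrk)
      (hcl ▸ hx))
    (fun x hx => smul_mem_blockSet hcone₀ hx)
    fun g hg => hp g fun v hv => by
      obtain ⟨x, hx, hxv⟩ := exists_mem_blockSet_of_mem_hprodSet hcone hr hv
      simpa [← funext hxv] using hg x fun i => subset_zclosure X (hx i)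
  have hxX : ∀ i, Function.curry x i ∈ X := fun i =>
    (hcl ▸ hx i : _ ∈ X ∪ {0}).resolve_right fun h0 => hp0 <| funext fun j => by
      rw [← hxp j]
      exact Finset.prod_eq_zero (Finset.mem_univ i) (congrFun h0 j)
  exact ⟨Function.curry x, hxX, 1, one_ne_zero, funext fun j => by simp [Finset.prod_apply, hxp]⟩

end HadamardProducts

theorem stmt14_general (N n r : ℕ) (X : Set (Fin (N + 1) → ℂ))
    (hirr : ZIrred X)
    (hcone : ∀ v ∈ X, ∀ c : ℂ, c ≠ 0 → c • v ∈ X)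
    (hcl : zclosure X = X ∪ {0})
    (hzero : ∀ v ∈ X, Nat.card {i : Fin (N + 1) // v i = 0} ≤ n)
    (hr : 2 ≤ r) (hrn : r * n ≤ N) :
    hpow X r = hprodSet X r ∪ {0} ∧
    ∀ p : Fin (N + 1) → ℂ, p ≠ 0 → p ∈ hpow X r →
      (∀ s, 1 ≤ s → s < r → p ∉ hpow X s) → HrkEq X r p := by
  have hpow_eq : hpow X r = hprodSet X r ∪ {0} := by
    refine Set.Subset.antisymm (fun p hp => ?_) (Set.union_subset (subset_zclosure _) ?_)
    · by_cases hp0 : p = 0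
      · exact Or.inr hp0
      · exact Or.inl (mem_hprodSet_of_mem_hpow hcone hcl hzero (by omega) (by omega) hp0 hp)
    · exact Set.singleton_subset_iff.mpr (zero_mem_zclosure_of_smul_mem
        (hprodSet_nonempty hirr.1 r) fun v hv c hc => smul_mem_hprodSet hv hc)
  refine ⟨hpow_eq, fun p hp0 hp hlow =>
    ⟨?_, fun m hm hmr hpm => hlow m hm hmr (subset_zclosure _ hpm)⟩⟩
  rw [hpow_eq] at hp
  exact hp.resolve_right hp0

/-- if `X ⊂ ℙ^N` is irreducible of dimension `n ≤ N/2` (affine cone of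
dimension `n+1`) with no point having more than `n` zero coordinates, then for `r ≥ 2`
with `rn ≤ N` the `r`-th Hadamard power is the honest set of `r`-fold Hadamard products
(together with the cone point), and every point of it of border Hadamard rank `r` has
Hadamard rank exactly `r`. -/
theorem stmt14 (N n r : ℕ) (X : Set (Fin (N + 1) → ℂ))
    (hn : 2 * n ≤ N) (hirr : ZIrred X)
    (hdim : zdim X = (n + 1 : ℕ))
    (hne : ∀ v ∈ X, v ≠ 0)
    (hcone : ∀ v ∈ X, ∀ c : ℂ, c ≠ 0 → c • v ∈ X)
    (hcl : zclosure X = X ∪ {0})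
    (hzero : ∀ v ∈ X, Nat.card {i : Fin (N + 1) // v i = 0} ≤ n)
    (hr : 2 ≤ r) (hrn : r * n ≤ N) :
    hpow X r = hprodSet X r ∪ {0} ∧
    ∀ p : Fin (N + 1) → ℂ, p ≠ 0 → p ∈ hpow X r →
      (∀ s, 1 ≤ s → s < r → p ∉ hpow X s) → HrkEq X r p :=
  stmt14_general N n r X hirr hcone hcl hzero hr hrn
end

section
/- Let C ⊂ ℙ^N be an irreducible curve with no point having two or more zero coordinates (C ∩ Δ_{N−2} = ∅). Then for any coordinate point p (e.g. p = (1:0:⋯:0)), the Hadamard-C-rank of p is exactly N: since each point of C has at most one zero coordinate, any Hadamard product of fewer than N points of C has fewer than N zero coordinates, so rank ≥ N; and by the upper bound Hrk_C ≤ N on all of ℙ^N, rank = N. -/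
open MvPolynomial

/-- for an irreducible curve `C ⊂ ℙ^N` with no point having two or more
zero coordinates, assuming the global upper bound `Hrk_C ≤ N`, every coordinate point has
Hadamard-`C`-rank exactly `N`. -/
theorem stmt16 (N : ℕ) (hN : 1 ≤ N) (C : Set (Fin (N + 1) → ℂ)) (hirr : ZIrred C)
    (hΔ : ∀ v ∈ C, Nat.card {i : Fin (N + 1) // v i = 0} ≤ 1)
    (hub : ∀ p : Fin (N + 1) → ℂ, p ≠ 0 → HrkLe C N p)
    (i : Fin (N + 1)) :
    HrkEq C N (Pi.single i 1) := by
  have hns : (Pi.single i 1 : Fin (N+1) → ℂ) ≠ 0 := by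
    intro h
    have := congrFun h i
    simp at this
  have key : ∀ m, HadDecomp C m (Pi.single i 1) → N ≤ m := by
    intro m hm
    simp only [HadDecomp, hprodSet, Set.mem_setOf_eq, ProjEq] at hm
    obtain ⟨f, hf, c, hc, hp⟩ := hm
    have hz : ∀ j : Fin (N+1), j ≠ i → (∏ k, f k) j = 0 := by
      intro j hj
      have h1 := congrFun hp j
      rw [Pi.single_apply, if_neg hj, Pi.smul_apply, smul_eq_mul] at h1
      rcases mul_eq_zero.mp h1.symm with h | h
      · exact absurd h hc
      · exact h
    have hsub : (Finset.univ.erase i) ⊆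
        Finset.univ.biUnion (fun k : Fin m => Finset.univ.filter (fun j => f k j = 0)) := by
      intro j hj
      have hji : j ≠ i := Finset.ne_of_mem_erase hj
      have hpj : (∏ k, f k) j = 0 := hz j hji
      rw [Finset.prod_apply] at hpj
      obtain ⟨k, _, hk⟩ := Finset.prod_eq_zero_iff.mp hpj
      exact Finset.mem_biUnion.mpr ⟨k, Finset.mem_univ k,
        Finset.mem_filter.mpr ⟨Finset.mem_univ j, hk⟩⟩
    have hcard1 : ∀ k : Fin m, (Finset.univ.filter (fun j => f k j = 0)).card ≤ 1 := by
      intro k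
      have := hΔ (f k) (hf k)
      rwa [Nat.card_eq_fintype_card, Fintype.card_subtype] at this
    calc N = (Finset.univ.erase i).card := by
            simp [Finset.card_erase_of_mem, Fintype.card_fin]
      _ ≤ _ := Finset.card_le_card hsub
      _ ≤ ∑ k, (Finset.univ.filter (fun j => f k j = 0)).card := Finset.card_biUnion_le
      _ ≤ ∑ _k : Fin m, 1 := Finset.sum_le_sum fun k _ => hcard1 k
      _ = m := by simp
  obtain ⟨m, hm1, hmN, hdec⟩ := hub _ hns
  have hmeq : m = N := le_antisymm hmN (key m hdec)
  subst hmeq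
  exact ⟨hdec, fun m' _ h2 hd => absurd (key m' hd) (by omega)⟩
end

section
/- If (1:⋯:1) ∈ X ⊂ ℙ^N, then the Hadamard powers of X form an increasing chain: X^{⋆m} ⊆ X^{⋆(m+1)} for all m ≥ 1; consequently the variety η_m(X) of points of Hadamard-X-rank at most m (Zariski closure) equals X^{⋆m}. -/
open MvPolynomial

lemma zclosure_mono {n : ℕ} {S T : Set (Fin n → ℂ)} (h : S ⊆ T) :
    zclosure S ⊆ zclosure T := by
  intro v hv f hf
  exact hv f (fun w hw => hf w (h hw))

lemma hprodSet_step {n : ℕ} {X : Set (Fin n → ℂ)} (hone : (fun _ => (1 : ℂ)) ∈ X)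
    (k : ℕ) : hprodSet X k ⊆ hprodSet X (k + 1) := by
  rintro p ⟨f, hf, c, hc, hp⟩
  refine ⟨Fin.snoc f (fun _ => (1 : ℂ)), ?_, c, hc, ?_⟩
  · intro i
    refine Fin.lastCases ?_ ?_ i
    · simp [hone]
    · intro j; simpa using hf j
  · rw [Fin.prod_univ_castSucc]
    simpa [show (fun _ => (1:ℂ)) = (1 : Fin n → ℂ) from rfl] using hp

lemma hprodSet_le {n : ℕ} {X : Set (Fin n → ℂ)} (hone : (fun _ => (1 : ℂ)) ∈ X)
    {k m : ℕ} (h : k ≤ m) : hprodSet X k ⊆ hprodSet X m := by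
  induction h with
  | refl => exact subset_rfl
  | step _ ih => exact ih.trans (hprodSet_step hone _)

/-- if `(1:⋯:1) ∈ X`, the Hadamard powers form an increasing chain
`X^{⋆m} ⊆ X^{⋆(m+1)}`, and the closure `η_m(X)` of the set of points of
Hadamard-`X`-rank at most `m` equals `X^{⋆m}`. -/
theorem stmt19 (N : ℕ) (X : Set (Fin (N + 1) → ℂ)) (hone : (fun _ => (1 : ℂ)) ∈ X) :
    (∀ m, 1 ≤ m → hpow X m ⊆ hpow X (m + 1)) ∧
    ∀ m, 1 ≤ m → zclosure {p | HrkLe X m p} = hpow X m := by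
  constructor
  · intro m _
    exact zclosure_mono (hprodSet_step hone m)
  · intro m hm
    have hset : {p | HrkLe X m p} = hprodSet X m := by
      ext p
      constructor
      · rintro ⟨k, _, hk, hd⟩
        exact hprodSet_le hone hk hd
      · intro hp
        exact ⟨m, hm, le_rfl, hp⟩
    rw [hset]; rfl
end
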